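/- arXiv:2605.01756 — 11 statements merged into one kernel-verified Lean document; each statement's English description precedes it below -/
import Mathlib

section
/- Let m be a random variable with values in [0,1] and let v₁, v₀ be random variables with values in [0,1] such that the pair (v₁, v₀) is independent of m. Fix b ∈ [0,1], g ∈ (0,1) and u ≥ 0 such that |P(m ≤ b) − g| ≤ u. Define the inverse-propensity-weighted estimator ẽ = 𝟙[m ≤ b]·v₁/g − 𝟙[m > b]·v₀/(1−g) and the variance proxy σ = 1/(g(1−g)). Then |E[ẽ] − E[v₁ − v₀]| ≤ 4·u·σ. -/
open MeasureTheory ProbabilityTheory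

/-- Bias bound for the inverse-propensity-weighted treatment-effect estimator: if the pair of
potential outcomes `(v1, v0)` is independent of the highest other bid `m`, and `g` estimates
the propensity score `P(m ≤ b)` to accuracy `u`, then the IPW estimator
`e = 𝟙[m ≤ b]·v1/g − 𝟙[m > b]·v0/(1−g)` has bias at most `4·u·σ`, where `σ = 1/(g(1−g))`. -/
theorem ipw_bias_bound {Ω : Type*} [MeasurableSpace Ω] (P : Measure Ω) [IsProbabilityMeasure P]
    (m v1 v0 : Ω → ℝ) (hm : Measurable m) (hv1 : Measurable v1) (hv0 : Measurable v0)
    (hm01 : ∀ ω, m ω ∈ Set.Icc (0:ℝ) 1) (hv101 : ∀ ω, v1 ω ∈ Set.Icc (0:ℝ) 1)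
    (hv001 : ∀ ω, v0 ω ∈ Set.Icc (0:ℝ) 1)
    (hindep : IndepFun (fun ω => (v1 ω, v0 ω)) m P)
    (b : ℝ) (hb : b ∈ Set.Icc (0:ℝ) 1) (g : ℝ) (hg : g ∈ Set.Ioo (0:ℝ) 1)
    (u : ℝ) (hu : 0 ≤ u) (hgu : |(P {ω | m ω ≤ b}).toReal - g| ≤ u)
    (e : Ω → ℝ)
    (he : ∀ ω, e ω = (if m ω ≤ b then v1 ω / g else 0)
        - (if b < m ω then v0 ω / (1 - g) else 0))
    (σ : ℝ) (hσ : σ = 1 / (g * (1 - g))) :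
    |(∫ ω, e ω ∂P) - ∫ ω, (v1 ω - v0 ω) ∂P| ≤ 4 * u * σ := by
  obtain ⟨hg0, hg1⟩ := hg
  have hg1' : (0:ℝ) < 1 - g := by linarith
  set q : ℝ := (P {ω | m ω ≤ b}).toReal with hq
  -- indicator functions
  set φ : ℝ → ℝ := fun x => if x ≤ b then 1 else 0 with hφ
  set ψ : ℝ → ℝ := fun x => if b < x then 1 else 0 with hψ
  have hφm : Measurable φ := by
    apply Measurable.ite (measurableSet_Iic) measurable_const measurable_const
  have hψm : Measurable ψ := by
    apply Measurable.ite (measurableSet_Ioi) measurable_const measurable_const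
  have hA : MeasurableSet {ω | m ω ≤ b} := hm measurableSet_Iic
  have hAc : {ω | b < m ω} = {ω | m ω ≤ b}ᶜ := by
    ext ω; simp [not_le]
  -- integrability facts
  have hbdd : ∀ (f : Ω → ℝ), Measurable f → (∀ ω, |f ω| ≤ 1) → Integrable f P := by
    intro f hf hb1
    exact (integrable_const (1:ℝ)).mono' hf.aestronglyMeasurable (Filter.Eventually.of_forall hb1)
  have hiv1 : Integrable v1 P := hbdd v1 hv1 (fun ω => by
    have := hv101 ω; rw [abs_le]; constructor <;> [linarith [this.1]; exact this.2])
  have hiv0 : Integrable v0 P := hbdd v0 hv0 (fun ω => by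
    have := hv001 ω; rw [abs_le]; constructor <;> [linarith [this.1]; exact this.2])
  have hiφ : Integrable (fun ω => φ (m ω)) P := hbdd _ (hφm.comp hm) (fun ω => by
    simp only [hφ]; split <;> simp)
  have hiψ : Integrable (fun ω => ψ (m ω)) P := hbdd _ (hψm.comp hm) (fun ω => by
    simp only [hψ]; split <;> simp)
  -- independence
  have hind1 : IndepFun v1 (fun ω => φ (m ω)) P := by
    have := hindep.comp (measurable_fst) hφm
    exact this
  have hind0 : IndepFun v0 (fun ω => ψ (m ω)) P := by
    have := hindep.comp (measurable_snd) hψm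
    exact this
  -- integrals of indicators
  have hIφ : ∫ ω, φ (m ω) ∂P = q := by
    have : (fun ω => φ (m ω)) = Set.indicator {ω | m ω ≤ b} (fun _ => (1:ℝ)) := by
      ext ω; simp [hφ, Set.indicator_apply]
    rw [this, integral_indicator hA]
    simp [hq, measureReal_def]
  have hIψ : ∫ ω, ψ (m ω) ∂P = 1 - q := by
    have h1 : (fun ω => ψ (m ω)) = Set.indicator {ω | m ω ≤ b}ᶜ (fun _ => (1:ℝ)) := by
      ext ω; simp [hψ, Set.indicator_apply, not_le]
    rw [h1, integral_indicator hA.compl, setIntegral_const]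
    simp only [smul_eq_mul, mul_one]
    rw [measureReal_def, measure_compl hA (measure_ne_top P _), measure_univ,
      ENNReal.toReal_sub_of_le (prob_le_one) (by simp)]
    simp [hq]
  -- product integrals
  have hprod1 : ∫ ω, v1 ω * φ (m ω) ∂P = (∫ ω, v1 ω ∂P) * q := by
    rw [← hIφ]
    exact hind1.integral_fun_mul_eq_mul_integral hiv1.aestronglyMeasurable hiφ.aestronglyMeasurable
  have hprod0 : ∫ ω, v0 ω * ψ (m ω) ∂P = (∫ ω, v0 ω ∂P) * (1 - q) := by
    rw [← hIψ]
    exact hind0.integral_fun_mul_eq_mul_integral hiv0.aestronglyMeasurable hiψ.aestronglyMeasurable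
  -- rewrite e
  have he' : ∀ ω, e ω = v1 ω * φ (m ω) * (1/g) - v0 ω * ψ (m ω) * (1/(1-g)) := by
    intro ω
    rw [he ω]
    simp only [hφ, hψ]
    split_ifs with h1 h2 h2 <;> simp_all <;> ring
  have hIe : ∫ ω, e ω ∂P = (∫ ω, v1 ω ∂P) * q * (1/g) - (∫ ω, v0 ω ∂P) * (1-q) * (1/(1-g)) := by
    have heq : (fun ω => e ω) = fun ω => v1 ω * φ (m ω) * (1/g) - v0 ω * ψ (m ω) * (1/(1-g)) := by
      ext ω; exact he' ω
    have hφb : ∀ ω, |φ (m ω)| ≤ 1 := fun ω => by simp only [hφ]; split <;> simp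
    have hψb : ∀ ω, |ψ (m ω)| ≤ 1 := fun ω => by simp only [hψ]; split <;> simp
    have hv1b : ∀ ω, |v1 ω| ≤ 1 := fun ω => by
      have := hv101 ω; rw [abs_le]; exact ⟨by linarith [this.1], this.2⟩
    have hv0b : ∀ ω, |v0 ω| ≤ 1 := fun ω => by
      have := hv001 ω; rw [abs_le]; exact ⟨by linarith [this.1], this.2⟩
    have hI1 : Integrable (fun ω => v1 ω * φ (m ω)) P := by
      refine hbdd _ (hv1.mul (hφm.comp hm)) fun ω => ?_
      rw [abs_mul]
      exact mul_le_one₀ (hv1b ω) (abs_nonneg _) (hφb ω)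
    have hI0 : Integrable (fun ω => v0 ω * ψ (m ω)) P := by
      refine hbdd _ (hv0.mul (hψm.comp hm)) fun ω => ?_
      rw [abs_mul]
      exact mul_le_one₀ (hv0b ω) (abs_nonneg _) (hψb ω)
    rw [heq, integral_sub (hI1.mul_const _) (hI0.mul_const _)]
    rw [integral_mul_const, integral_mul_const, hprod1, hprod0]
  have hIsub : ∫ ω, (v1 ω - v0 ω) ∂P = (∫ ω, v1 ω ∂P) - ∫ ω, v0 ω ∂P :=
    integral_sub hiv1 hiv0
  set E1 := ∫ ω, v1 ω ∂P
  set E0 := ∫ ω, v0 ω ∂P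
  have hE1 : 0 ≤ E1 ∧ E1 ≤ 1 := by
    constructor
    · exact integral_nonneg fun ω => (hv101 ω).1
    · calc E1 ≤ ∫ _, (1:ℝ) ∂P := integral_mono hiv1 (integrable_const 1) fun ω => (hv101 ω).2
        _ = 1 := by simp
  have hE0 : 0 ≤ E0 ∧ E0 ≤ 1 := by
    constructor
    · exact integral_nonneg fun ω => (hv001 ω).1
    · calc E0 ≤ ∫ _, (1:ℝ) ∂P := integral_mono hiv0 (integrable_const 1) fun ω => (hv001 ω).2
        _ = 1 := by simp
  rw [hIe, hIsub]
  have key : E1 * q * (1/g) - E0 * (1-q) * (1/(1-g)) - (E1 - E0)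
      = (q - g) * (E1 / g + E0 / (1 - g)) := by
    field_simp
    ring
  rw [key, abs_mul]
  have h1 : |E1 / g + E0 / (1 - g)| ≤ 1/g + 1/(1-g) := by
    have : E1 / g + E0 / (1 - g) ≤ 1/g + 1/(1-g) := by
      gcongr
      · exact hE1.2
      · exact hE0.2
    have hnn : 0 ≤ E1 / g + E0 / (1 - g) :=
      add_nonneg (div_nonneg hE1.1 hg0.le) (div_nonneg hE0.1 hg1'.le)
    rw [abs_of_nonneg hnn]; exact this
  calc |q - g| * |E1 / g + E0 / (1 - g)| ≤ u * (1/g + 1/(1-g)) := by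
        apply mul_le_mul hgu h1 (abs_nonneg _) hu
    _ = u * σ := by rw [hσ]; field_simp; ring
    _ ≤ 4 * u * σ := by
        have hσnn : 0 ≤ σ := by rw [hσ]; positivity
        nlinarith [mul_nonneg hu hσnn]
end

section
/- Let T ≥ 2 be an integer, n = ⌈√T⌉, and grid points c_j = j/n for j = 0, 1, …, n. Let Φ be a finite index set, let (m_τ)_{τ∈Φ} be independent random variables with values in [0,1] all having the same distribution, and let (b_τ)_{τ∈Φ} be deterministic bids taken from the grid {c_0, …, c_n}. For j ∈ {1, …, n} set p_j = P(c_{j−1} < m_τ ≤ c_j), n_j = #{τ ∈ Φ : b_τ ≥ c_j}, assumed ≥ 1 for every j, and the empirical interval frequency p̂_j = #{τ ∈ Φ : b_τ ≥ c_j and c_{j−1} < m_τ ≤ c_j} / n_j. Then with probability at least 1 − T^{−3}, simultaneously for every j ∈ {1, …, n}: |Σ_{i≤j} (p_i − p̂_i)| ≤ 8·√(log T · Σ_{k≤j} p_k/n_k) + 8·log T / n_j, and (1/n)·|Σ_{i≤j} Σ_{k≤i} (p_k − p̂_k)| ≤ 8·√(log T · Σ_{k≤j} p_k/n_k) + 8·log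 T / n_j. -/
open MeasureTheory ProbabilityTheory Finset
open scoped ENNReal

lemma exp_quad {u : ℝ} (hu : |u| ≤ 1) : Real.exp u ≤ 1 + u + u ^ 2 := by
  have h := Real.exp_bound hu (n := 2) (by norm_num)
  have h2 : ∑ m ∈ Finset.range 2, u ^ m / m.factorial = 1 + u := by
    simp [Finset.sum_range_succ]
  rw [h2] at h
  have h3 : |u| ^ 2 ≤ 1 := by
    calc |u| ^ 2 ≤ 1 ^ 2 := by gcongr
    _ = 1 := one_pow 2
  have h4 := (abs_sub_le_iff.1 h).1
  have h5 : |u| ^ 2 = u ^ 2 := sq_abs u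
  have h6 : (↑(Nat.succ 2) / ((Nat.factorial 2 : ℝ) * (2:ℕ))) = 3/4 := by
    norm_num [Nat.factorial]
  rw [h6] at h4
  nlinarith [sq_nonneg u]


section
variable {Ω : Type*} [MeasurableSpace Ω] (P : Measure Ω) [IsProbabilityMeasure P]

lemma integrable_of_bounded' {f : Ω → ℝ} (hf : Measurable f) {C : ℝ}
    (hC : ∀ ω, |f ω| ≤ C) : Integrable f P := by
  refine Integrable.mono' (integrable_const C) hf.aestronglyMeasurable ?_
  filter_upwards with ω using (by simpa using hC ω)

lemma integrable_exp_mul_of_bounded {X : Ω → ℝ} (hX : Measurable X) {B t : ℝ}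
    (hbd : ∀ ω, |X ω| ≤ B) (ht : 0 ≤ t) (htB : t * B ≤ 1) :
    Integrable (fun ω => Real.exp (t * X ω)) P := by
  refine integrable_of_bounded' P ((hX.const_mul t).exp) (C := Real.exp 1) (fun ω => ?_)
  rw [abs_of_pos (Real.exp_pos _), Real.exp_le_exp]
  calc t * X ω ≤ |t * X ω| := le_abs_self _
  _ = t * |X ω| := by rw [abs_mul, abs_of_nonneg ht]
  _ ≤ t * B := by
      rcases ht.eq_or_lt with h | h
      · simp [← h]
      · exact (mul_le_mul_iff_right₀ h).2 (hbd ω)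
  _ ≤ 1 := htB

lemma mgf_le_of_bounded {Ω : Type*} [MeasurableSpace Ω] (P : Measure Ω)
    [IsProbabilityMeasure P] {X : Ω → ℝ} (hX : Measurable X) {B t : ℝ}
    (hbd : ∀ ω, |X ω| ≤ B) (ht : 0 ≤ t) (htB : t * B ≤ 1)
    (hmean : ∫ ω, X ω ∂P = 0) :
    mgf X P t ≤ Real.exp (t ^ 2 * ∫ ω, (X ω) ^ 2 ∂P) := by
  have hint : Integrable X P := integrable_of_bounded' P hX hbd
  have hint2 : Integrable (fun ω => (X ω) ^ 2) P := by
    refine integrable_of_bounded' P (hX.pow_const 2) (C := B ^ 2) (fun ω => ?_)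
    rw [abs_pow]
    exact pow_le_pow_left₀ (abs_nonneg _) (hbd ω) 2
  have hintexp : Integrable (fun ω => Real.exp (t * X ω)) P := by
    refine integrable_of_bounded' P ((hX.const_mul t).exp) (C := Real.exp 1) (fun ω => ?_)
    rw [abs_of_pos (Real.exp_pos _), Real.exp_le_exp]
    calc t * X ω ≤ |t * X ω| := le_abs_self _
    _ = t * |X ω| := by rw [abs_mul, abs_of_nonneg ht]
    _ ≤ t * B := by
        rcases ht.eq_or_lt with h | h
        · simp [← h]
        · exact (mul_le_mul_iff_right₀ h).2 (hbd ω)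
    _ ≤ 1 := htB
  have key : ∀ ω, Real.exp (t * X ω) ≤ 1 + t * X ω + t ^ 2 * (X ω) ^ 2 := by
    intro ω
    have h1 : |t * X ω| ≤ 1 := by
      rw [abs_mul, abs_of_nonneg ht]
      calc t * |X ω| ≤ t * B := by
            rcases ht.eq_or_lt with h | h
            · simp [← h]
            · exact (mul_le_mul_iff_right₀ h).2 (hbd ω)
      _ ≤ 1 := htB
    have := exp_quad h1
    calc Real.exp (t * X ω) ≤ 1 + t * X ω + (t * X ω) ^ 2 := this
    _ = 1 + t * X ω + t ^ 2 * (X ω) ^ 2 := by ring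
  have i1 : Integrable (fun ω => 1 + t * X ω) P := by
    exact (integrable_const 1).add (hint.const_mul t)
  have i2 : Integrable (fun ω => t ^ 2 * (X ω) ^ 2) P := by
    exact hint2.const_mul (t ^ 2)
  have hintsum : Integrable (fun ω => 1 + t * X ω + t ^ 2 * (X ω) ^ 2) P := by
    exact i1.add i2
  calc mgf X P t = ∫ ω, Real.exp (t * X ω) ∂P := rfl
  _ ≤ ∫ ω, (1 + t * X ω + t ^ 2 * (X ω) ^ 2) ∂P := integral_mono hintexp hintsum key
  _ = 1 + t ^ 2 * ∫ ω, (X ω) ^ 2 ∂P := by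
      rw [integral_add i1 i2, integral_add (integrable_const 1) (hint.const_mul t),
        MeasureTheory.integral_const_mul, MeasureTheory.integral_const_mul, hmean]
      simp
  _ ≤ Real.exp (t ^ 2 * ∫ ω, (X ω) ^ 2 ∂P) := by
      have := Real.add_one_le_exp (t ^ 2 * ∫ ω, (X ω) ^ 2 ∂P)
      linarith

lemma bernstein_tail {ι : Type*} [Fintype ι] (X : ι → Ω → ℝ)
    (hindep : iIndepFun X P) (hmeas : ∀ i, Measurable (X i))
    {B V L : ℝ} (hB : 0 < B) (hbd : ∀ i ω, |X i ω| ≤ B)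
    (hmean : ∀ i, ∫ ω, X i ω ∂P = 0)
    (hV : ∑ i, ∫ ω, (X i ω) ^ 2 ∂P ≤ V) (hV0 : 0 ≤ V) (hL : 0 < L) :
    (P {ω | 8 * Real.sqrt (L * V) + 8 * L * B ≤ ∑ i, X i ω}).toReal ≤
      Real.exp (-(6 * L)) := by
  set s := Real.sqrt (L * V) with hs_def
  have hs0 : 0 ≤ s := Real.sqrt_nonneg _
  have hs2 : s ^ 2 = L * V := Real.sq_sqrt (by positivity)
  set t := 8 * s + 8 * L * B with ht_def
  have ht0 : 0 < t := by positivity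
  -- choose lam
  obtain ⟨lam, hlam0, hlamB, hexp⟩ :
      ∃ lam : ℝ, 0 ≤ lam ∧ lam * B ≤ 1 ∧ 6 * L ≤ lam * t - lam ^ 2 * V := by
    by_cases hcase : t * B ≤ 2 * V
    · have hVpos : 0 < V := by nlinarith
      refine ⟨t / (2 * V), by positivity, ?_, ?_⟩
      · rw [div_mul_eq_mul_div, div_le_one (by positivity)]
        linarith
      · have heq : t / (2 * V) * t - (t / (2 * V)) ^ 2 * V = t ^ 2 / (4 * V) := by
          field_simp; ring
        rw [heq, le_div_iff₀ (by positivity), ht_def]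
        nlinarith [hs2, mul_nonneg hs0 (mul_nonneg hL.le hB.le), sq_nonneg (L*B), hVpos.le, hs0]
    · push_neg at hcase
      refine ⟨1 / B, by positivity, by field_simp; exact le_rfl, ?_⟩
      have heq : 1 / B * t - (1 / B) ^ 2 * V = (t * B - V) / B ^ 2 := by
        field_simp
      rw [heq, le_div_iff₀ (by positivity)]
      -- need 6*L*B^2 ≤ t*B - V
      set w := Real.sqrt V with hw_def
      have hw0 : 0 ≤ w := Real.sqrt_nonneg _
      have hw2 : w ^ 2 = V := Real.sq_sqrt hV0
      set r := Real.sqrt L with hr_def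
      have hr0 : 0 ≤ r := Real.sqrt_nonneg _
      have hr2 : r ^ 2 = L := Real.sq_sqrt hL.le
      have hsrw : s = r * w := by
        rw [hs_def, hw_def, hr_def, ← Real.sqrt_mul hL.le]
      rw [ht_def, hsrw, ← hw2, ← hr2] at hcase ⊢
      by_cases hsub : r * B ≤ 2 * w
      · nlinarith [mul_le_mul_of_nonneg_left hsub (by positivity : (0:ℝ) ≤ r * B)]
      · push_neg at hsub
        nlinarith [mul_lt_mul'' hsub hsub (by positivity) (by positivity),
          mul_nonneg (mul_nonneg hr0 hw0) hB.le]
  -- Chernoff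
  have hintexp : ∀ i, Integrable (fun ω => Real.exp (lam * X i ω)) P := fun i =>
    integrable_exp_mul_of_bounded P (hmeas i) (hbd i) hlam0 hlamB
  have h_int_sum : Integrable (fun ω => Real.exp (lam * (∑ i, X i) ω)) P :=
    hindep.integrable_exp_mul_sum hmeas (fun i _ => hintexp i)
  have hset : {ω | t ≤ ∑ i, X i ω} = {ω | t ≤ (∑ i, X i) ω} := by
    ext ω; simp [Finset.sum_apply]
  have hcher := measure_ge_le_exp_mul_mgf (X := ∑ i, X i) (μ := P) t hlam0 h_int_sum
  rw [← hset] at hcher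
  have hmgf_sum : mgf (∑ i, X i) P lam = ∏ i, mgf (X i) P lam :=
    hindep.mgf_sum hmeas Finset.univ
  have hmgf_each : ∀ i, mgf (X i) P lam ≤ Real.exp (lam ^ 2 * ∫ ω, (X i ω) ^ 2 ∂P) :=
    fun i => mgf_le_of_bounded P (hmeas i) (hbd i) hlam0 hlamB (hmean i)
  have hprod : ∏ i, mgf (X i) P lam ≤ Real.exp (lam ^ 2 * V) := by
    calc ∏ i, mgf (X i) P lam ≤ ∏ i, Real.exp (lam ^ 2 * ∫ ω, (X i ω) ^ 2 ∂P) :=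
          Finset.prod_le_prod (fun i _ => mgf_nonneg) (fun i _ => hmgf_each i)
    _ = Real.exp (∑ i, lam ^ 2 * ∫ ω, (X i ω) ^ 2 ∂P) := by rw [Real.exp_sum]
    _ ≤ Real.exp (lam ^ 2 * V) := by
        rw [Real.exp_le_exp, ← Finset.mul_sum]
        nlinarith [sq_nonneg lam]
  calc (P {ω | t ≤ ∑ i, X i ω}).toReal
      ≤ Real.exp (-lam * t) * mgf (∑ i, X i) P lam := hcher
  _ ≤ Real.exp (-lam * t) * Real.exp (lam ^ 2 * V) := by
      have := (Real.exp_pos (-lam * t)).le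
      rw [hmgf_sum]
      exact mul_le_mul_of_nonneg_left hprod this
  _ = Real.exp (-lam * t + lam ^ 2 * V) := (Real.exp_add _ _).symm
  _ ≤ Real.exp (-(6 * L)) := by rw [Real.exp_le_exp]; linarith

end

lemma per_j_bound {Ω : Type*} [MeasurableSpace Ω] (P : Measure Ω) [IsProbabilityMeasure P]
    {ι : Type*} [Fintype ι]
    (c : ℕ → ℝ) (m : ι → Ω → ℝ) (hmeas : ∀ τ, Measurable (m τ))
    (hindep : iIndepFun m P)
    (μ : Measure ℝ) (hdist : ∀ τ, Measure.map (m τ) P = μ)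
    (b : ι → ℝ) (p : ℕ → ℝ) (hp : ∀ j, p j = (μ (Set.Ioc (c (j - 1)) (c j))).toReal)
    (nn : ℕ → ℕ) (hnn : ∀ j, nn j = (Finset.univ.filter (fun τ : ι => c j ≤ b τ)).card)
    (phat : ℕ → Ω → ℝ)
    (hphat : ∀ j ω, phat j ω =
      ((Finset.univ.filter
          (fun τ : ι => c j ≤ b τ ∧ m τ ω ∈ Set.Ioc (c (j - 1)) (c j))).card : ℝ) / nn j)
    (L : ℝ) (hL : 0 < L) (j : ℕ) (hj1 : 1 ≤ j) (hnnj : 1 ≤ nn j)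
    (hnnmono : ∀ i, 1 ≤ i → i ≤ j → nn j ≤ nn i)
    (hexcl : ∀ {i i' : ℕ} (x : ℝ), 1 ≤ i → 1 ≤ i' → i ≠ i' →
      x ∈ Set.Ioc (c (i-1)) (c i) → x ∈ Set.Ioc (c (i'-1)) (c i') → False)
    (hpsum : ∑ i ∈ Finset.Icc 1 j, p i ≤ 1) (hp0 : ∀ i, 0 ≤ p i) :
    (P {ω | ¬ (|∑ i ∈ Finset.Icc 1 j, (p i - phat i ω)| ≤
      8 * Real.sqrt (L * ∑ k ∈ Finset.Icc 1 j, p k / nn k) + 8 * L / nn j)}).toReal ≤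
    2 * Real.exp (-(6 * L)) := by
  classical
  have hnnjR : (0:ℝ) < nn j := by exact_mod_cast hnnj
  set B : ℝ := 1 / (nn j : ℝ) with hB_def
  have hB : 0 < B := by positivity
  have hnniR : ∀ i, 1 ≤ i → i ≤ j → (0:ℝ) < nn i ∧ (nn j : ℝ) ≤ (nn i : ℝ) := by
    intro i h1 h2
    have h3 := hnnmono i h1 h2
    have h4 : 1 ≤ nn i := le_trans hnnj h3
    exact ⟨by exact_mod_cast h4, by exact_mod_cast h3⟩
  set F : ι → Finset ℕ := fun τ => (Finset.Icc 1 j).filter (fun i => c i ≤ b τ) with hF_def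
  set g : ι → ℝ → ℝ := fun τ x => ∑ i ∈ F τ,
    (p i - Set.indicator (Set.Ioc (c (i-1)) (c i)) (fun _ => (1:ℝ)) x) / nn i with hg_def
  have hgmeas : ∀ τ, Measurable (g τ) := by
    intro τ
    simp only [hg_def]
    apply Finset.measurable_sum
    intro i _
    exact (measurable_const.sub (measurable_const.indicator measurableSet_Ioc)).div_const _
  have hXmeas : ∀ τ, Measurable (g τ ∘ m τ) := fun τ => (hgmeas τ).comp (hmeas τ)
  have hXindep : iIndepFun (fun τ => g τ ∘ m τ) P :=
    hindep.comp g hgmeas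
  have hFmem : ∀ {τ : ι} {i : ℕ}, i ∈ F τ → 1 ≤ i ∧ i ≤ j := by
    intro τ i hi
    simp only [hF_def, Finset.mem_filter, Finset.mem_Icc] at hi
    exact ⟨hi.1.1, hi.1.2⟩
  -- at most one indicator is nonzero
  have hsingle : ∀ (τ : ι) (x : ℝ),
      (∀ u : ℕ → ℝ, ∑ i ∈ F τ,
        Set.indicator (Set.Ioc (c (i-1)) (c i)) (fun _ => (1:ℝ)) x * u i = 0) ∨
      (∃ i₀, i₀ ∈ F τ ∧ x ∈ Set.Ioc (c (i₀-1)) (c i₀) ∧ ∀ u : ℕ → ℝ, ∑ i ∈ F τ,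
        Set.indicator (Set.Ioc (c (i-1)) (c i)) (fun _ => (1:ℝ)) x * u i = u i₀) := by
    intro τ x
    by_cases h : ∃ i₀, i₀ ∈ F τ ∧ x ∈ Set.Ioc (c (i₀-1)) (c i₀)
    · obtain ⟨i₀, hi₀, hx⟩ := h
      right
      refine ⟨i₀, hi₀, hx, fun u => ?_⟩
      rw [Finset.sum_eq_single_of_mem i₀ hi₀]
      · rw [Set.indicator_of_mem hx, one_mul]
      · intro i hi hne
        rw [Set.indicator_of_notMem, zero_mul]
        intro hx'
        exact hexcl x (hFmem hi).1 (hFmem hi₀).1 hne hx' hx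
    · left
      intro u
      apply Finset.sum_eq_zero
      intro i hi
      rw [Set.indicator_of_notMem, zero_mul]
      exact fun hx' => h ⟨i, hi, hx'⟩
  -- split g into mean part and indicator part
  have hgsplit : ∀ τ x, g τ x = (∑ i ∈ F τ, p i / nn i) -
      ∑ i ∈ F τ, Set.indicator (Set.Ioc (c (i-1)) (c i)) (fun _ => (1:ℝ)) x * (1/(nn i:ℝ)) := by
    intro τ x
    simp only [hg_def]
    rw [← Finset.sum_sub_distrib]
    apply Finset.sum_congr rfl
    intro i _
    rw [sub_div, mul_one_div]
  have hA0 : ∀ τ, 0 ≤ ∑ i ∈ F τ, p i / nn i :=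
    fun τ => Finset.sum_nonneg fun i _ => div_nonneg (hp0 i) (Nat.cast_nonneg _)
  have hAB : ∀ τ, ∑ i ∈ F τ, p i / nn i ≤ B := by
    intro τ
    calc ∑ i ∈ F τ, p i / nn i ≤ ∑ i ∈ F τ, p i / nn j := by
          apply Finset.sum_le_sum
          intro i hi
          obtain ⟨h1, h2⟩ := hFmem hi
          obtain ⟨hpos, hle⟩ := hnniR i h1 h2
          gcongr
          exact hp0 i
    _ = (∑ i ∈ F τ, p i) / nn j := by rw [Finset.sum_div]
    _ ≤ 1 / nn j := by
          gcongr
          exact le_trans (Finset.sum_le_sum_of_subset_of_nonneg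
            (by rw [hF_def]; exact Finset.filter_subset _ _) (fun k _ _ => hp0 k)) hpsum
    _ = B := by rw [hB_def]
  have hY0 : ∀ τ x, 0 ≤ ∑ i ∈ F τ,
      Set.indicator (Set.Ioc (c (i-1)) (c i)) (fun _ => (1:ℝ)) x * (1/(nn i:ℝ)) := by
    intro τ x
    apply Finset.sum_nonneg
    intro i _
    apply mul_nonneg (Set.indicator_nonneg (fun _ _ => zero_le_one) _) (by positivity)
  have hYB : ∀ τ x, ∑ i ∈ F τ,
      Set.indicator (Set.Ioc (c (i-1)) (c i)) (fun _ => (1:ℝ)) x * (1/(nn i:ℝ)) ≤ B := by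
    intro τ x
    rcases hsingle τ x with h | ⟨i₀, hi₀, hx, h⟩
    · rw [h]; exact hB.le
    · rw [h]
      obtain ⟨h1, h2⟩ := hFmem hi₀
      obtain ⟨hpos, hle⟩ := hnniR i₀ h1 h2
      rw [hB_def]
      gcongr
  have hXbd : ∀ τ ω, |(g τ ∘ m τ) ω| ≤ B := by
    intro τ ω
    have h1 := hA0 τ
    have h2 := hAB τ
    have h3 := hY0 τ (m τ ω)
    have h4 := hYB τ (m τ ω)
    have h5 : (g τ ∘ m τ) ω = g τ (m τ ω) := rfl
    rw [h5, hgsplit]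
    rw [abs_le]
    constructor <;> linarith
  -- indicator integrals
  have hindmeas : ∀ (τ : ι) (i : ℕ), Measurable (fun ω =>
      Set.indicator (Set.Ioc (c (i-1)) (c i)) (fun _ => (1:ℝ)) (m τ ω)) :=
    fun τ i => (measurable_const.indicator measurableSet_Ioc).comp (hmeas τ)
  have hindbd : ∀ (s : Set ℝ) (x : ℝ), |Set.indicator s (fun _ => (1:ℝ)) x| ≤ 1 := by
    intro s x
    by_cases h : x ∈ s
    · rw [Set.indicator_of_mem h]; norm_num
    · rw [Set.indicator_of_notMem h]; norm_num
  have hindint : ∀ (τ : ι) (i : ℕ), Integrable (fun ω =>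
      Set.indicator (Set.Ioc (c (i-1)) (c i)) (fun _ => (1:ℝ)) (m τ ω)) P :=
    fun τ i => integrable_of_bounded' P (hindmeas τ i) (fun ω => hindbd _ _)
  have hindval : ∀ (τ : ι) (i : ℕ), ∫ ω,
      Set.indicator (Set.Ioc (c (i-1)) (c i)) (fun _ => (1:ℝ)) (m τ ω) ∂P = p i := by
    intro τ i
    rw [hp i]
    have h1 : ∫ ω, Set.indicator (Set.Ioc (c (i-1)) (c i)) (fun _ => (1:ℝ)) (m τ ω) ∂P
        = ∫ x, Set.indicator (Set.Ioc (c (i-1)) (c i)) (fun _ => (1:ℝ)) x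
            ∂(Measure.map (m τ) P) :=
      (integral_map (hmeas τ).aemeasurable
        (measurable_const.indicator measurableSet_Ioc).aestronglyMeasurable).symm
    rw [h1, hdist τ, integral_indicator_const (1:ℝ) measurableSet_Ioc, smul_eq_mul, mul_one]; rfl
  -- means are zero
  have hXmean : ∀ τ, ∫ ω, (g τ ∘ m τ) ω ∂P = 0 := by
    intro τ
    have hterm : ∀ i ∈ F τ, Integrable (fun ω =>
        (p i - Set.indicator (Set.Ioc (c (i-1)) (c i)) (fun _ => (1:ℝ)) (m τ ω)) / nn i) P :=
      fun i _ => ((integrable_const (p i)).sub (hindint τ i)).div_const _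
    have h0 : ∫ ω, (g τ ∘ m τ) ω ∂P = ∑ i ∈ F τ, ∫ ω,
        (p i - Set.indicator (Set.Ioc (c (i-1)) (c i)) (fun _ => (1:ℝ)) (m τ ω)) / nn i ∂P := by
      rw [show (fun ω => (g τ ∘ m τ) ω) = fun ω => ∑ i ∈ F τ,
        (p i - Set.indicator (Set.Ioc (c (i-1)) (c i)) (fun _ => (1:ℝ)) (m τ ω)) / nn i from rfl]
      exact integral_finset_sum (F τ) hterm
    rw [h0]
    apply Finset.sum_eq_zero
    intro i _
    rw [integral_div, integral_sub (integrable_const _) (hindint τ i), integral_const,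
      hindval τ i]
    simp
  -- the indicator part Y and its moments
  set Y : ι → ℝ → ℝ := fun τ x => ∑ i ∈ F τ,
    Set.indicator (Set.Ioc (c (i-1)) (c i)) (fun _ => (1:ℝ)) x * (1/(nn i:ℝ)) with hY_def
  have hYmeas : ∀ τ, Measurable (fun ω => Y τ (m τ ω)) := by
    intro τ
    simp only [hY_def]
    apply Finset.measurable_sum
    intro i _
    exact ((measurable_const.indicator measurableSet_Ioc).comp (hmeas τ)).mul_const _
  have hYint : ∀ τ, Integrable (fun ω => Y τ (m τ ω)) P := by
    intro τ
    apply integrable_of_bounded' P (hYmeas τ) (C := B)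
    intro ω
    rw [abs_of_nonneg (hY0 τ (m τ ω))]
    exact hYB τ (m τ ω)
  have hYval : ∀ τ, ∫ ω, Y τ (m τ ω) ∂P = ∑ i ∈ F τ, p i / nn i := by
    intro τ
    have h0 : ∫ ω, Y τ (m τ ω) ∂P = ∑ i ∈ F τ, ∫ ω,
        Set.indicator (Set.Ioc (c (i-1)) (c i)) (fun _ => (1:ℝ)) (m τ ω) * (1/(nn i:ℝ)) ∂P := by
      exact integral_finset_sum (F τ) (fun i _ => (hindint τ i).mul_const _)
    rw [h0]
    apply Finset.sum_congr rfl
    intro i _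
    rw [integral_mul_const, hindval τ i, mul_one_div]
  have hYsq : ∀ τ x, (Y τ x) ^ 2 = ∑ i ∈ F τ,
      Set.indicator (Set.Ioc (c (i-1)) (c i)) (fun _ => (1:ℝ)) x * (1/(nn i:ℝ)) ^ 2 := by
    intro τ x
    rcases hsingle τ x with h | ⟨i₀, hi₀, hx, h⟩
    · simp only [hY_def]
      rw [h (fun i => 1/(nn i:ℝ)), h (fun i => (1/(nn i:ℝ)) ^ 2)]
      norm_num
    · simp only [hY_def]
      rw [h (fun i => 1/(nn i:ℝ)), h (fun i => (1/(nn i:ℝ)) ^ 2)]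
  have hY2val : ∀ τ, ∫ ω, (Y τ (m τ ω)) ^ 2 ∂P = ∑ i ∈ F τ, p i * (1/(nn i:ℝ)) ^ 2 := by
    intro τ
    have h0 : (fun ω => (Y τ (m τ ω)) ^ 2) = fun ω => ∑ i ∈ F τ,
        Set.indicator (Set.Ioc (c (i-1)) (c i)) (fun _ => (1:ℝ)) (m τ ω) * (1/(nn i:ℝ)) ^ 2 :=
      funext (fun ω => hYsq τ (m τ ω))
    rw [h0, integral_finset_sum (F τ) (fun i _ => (hindint τ i).mul_const _)]
    apply Finset.sum_congr rfl
    intro i _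
    rw [integral_mul_const, hindval τ i]
  -- per-sample second moment bound
  have hsq : ∀ τ, ∫ ω, ((g τ ∘ m τ) ω) ^ 2 ∂P ≤ ∑ i ∈ F τ, p i * (1/(nn i:ℝ)) ^ 2 := by
    intro τ
    set A := ∑ i ∈ F τ, p i / nn i with hA_def
    have hpt : (fun ω => ((g τ ∘ m τ) ω) ^ 2) = fun ω =>
        A ^ 2 - 2 * A * (Y τ (m τ ω)) + (Y τ (m τ ω)) ^ 2 := by
      funext ω
      have h5 : (g τ ∘ m τ) ω = g τ (m τ ω) := rfl
      simp only [hY_def]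
      rw [h5, hgsplit τ (m τ ω), ← hA_def]
      ring
    have hY2int : Integrable (fun ω => (Y τ (m τ ω)) ^ 2) P := by
      apply integrable_of_bounded' P ((hYmeas τ).pow_const 2) (C := B ^ 2)
      intro ω
      rw [abs_pow]
      apply pow_le_pow_left₀ (abs_nonneg _) _ 2
      rw [abs_of_nonneg (hY0 τ (m τ ω))]
      exact hYB τ (m τ ω)
    have hsub : Integrable (fun ω => A ^ 2 - 2 * A * (Y τ (m τ ω))) P := by
      exact (integrable_const _).sub ((hYint τ).const_mul _)
    have hcalc : ∫ ω, ((g τ ∘ m τ) ω) ^ 2 ∂P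
        = A ^ 2 - 2 * A * A + ∫ ω, (Y τ (m τ ω)) ^ 2 ∂P := by
      rw [hpt, integral_add hsub hY2int,
        integral_sub (integrable_const _) ((hYint τ).const_mul _),
        integral_const, MeasureTheory.integral_const_mul, hYval τ, ← hA_def]
      simp
    rw [hcalc, hY2val τ]
    nlinarith [sq_nonneg A]
  -- total variance
  have hV0 : (0:ℝ) ≤ ∑ k ∈ Finset.Icc 1 j, p k / nn k :=
    Finset.sum_nonneg fun k _ => div_nonneg (hp0 k) (Nat.cast_nonneg _)
  have hswap : ∀ (f : ℕ → ι → ℝ), ∑ τ : ι, ∑ i ∈ F τ, f i τ =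
      ∑ i ∈ Finset.Icc 1 j, ∑ τ ∈ Finset.univ.filter (fun τ => c i ≤ b τ), f i τ := by
    intro f
    calc ∑ τ : ι, ∑ i ∈ F τ, f i τ
        = ∑ τ : ι, ∑ i ∈ Finset.Icc 1 j, if c i ≤ b τ then f i τ else 0 :=
          Finset.sum_congr rfl (fun τ _ => Finset.sum_filter _ _)
    _ = ∑ i ∈ Finset.Icc 1 j, ∑ τ : ι, if c i ≤ b τ then f i τ else 0 := Finset.sum_comm
    _ = ∑ i ∈ Finset.Icc 1 j, ∑ τ ∈ Finset.univ.filter (fun τ => c i ≤ b τ), f i τ :=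
          Finset.sum_congr rfl (fun i _ => (Finset.sum_filter _ _).symm)
  have hVtot : ∑ τ, ∫ ω, ((g τ ∘ m τ) ω) ^ 2 ∂P ≤ ∑ k ∈ Finset.Icc 1 j, p k / nn k := by
    calc ∑ τ, ∫ ω, ((g τ ∘ m τ) ω) ^ 2 ∂P
        ≤ ∑ τ, ∑ i ∈ F τ, p i * (1/(nn i:ℝ)) ^ 2 :=
          Finset.sum_le_sum fun τ _ => hsq τ
    _ = ∑ i ∈ Finset.Icc 1 j, ∑ τ ∈ Finset.univ.filter (fun τ => c i ≤ b τ),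
          p i * (1/(nn i:ℝ)) ^ 2 := hswap _
    _ = ∑ i ∈ Finset.Icc 1 j, (nn i : ℝ) * (p i * (1/(nn i:ℝ)) ^ 2) := by
          apply Finset.sum_congr rfl
          intro i _
          rw [Finset.sum_const, ← hnn i, nsmul_eq_mul]
    _ = ∑ k ∈ Finset.Icc 1 j, p k / nn k := by
          apply Finset.sum_congr rfl
          intro i hi
          obtain ⟨h1, h2⟩ := Finset.mem_Icc.mp hi
          obtain ⟨hpos, _⟩ := hnniR i h1 h2
          have hne : (nn i : ℝ) ≠ 0 := ne_of_gt hpos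
          field_simp
  -- the sum identity
  have hDeq : ∀ ω, ∑ i ∈ Finset.Icc 1 j, (p i - phat i ω) = ∑ τ, (g τ ∘ m τ) ω := by
    intro ω
    have h0 : ∑ τ : ι, (g τ ∘ m τ) ω = ∑ τ : ι, ∑ i ∈ F τ,
        (p i - Set.indicator (Set.Ioc (c (i-1)) (c i)) (fun _ => (1:ℝ)) (m τ ω)) / nn i := rfl
    rw [h0, hswap (fun i τ =>
      (p i - Set.indicator (Set.Ioc (c (i-1)) (c i)) (fun _ => (1:ℝ)) (m τ ω)) / nn i)]
    apply Finset.sum_congr rfl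
    intro i hi
    obtain ⟨h1, h2⟩ := Finset.mem_Icc.mp hi
    obtain ⟨hposR, hle⟩ := hnniR i h1 h2
    have hne : (nn i : ℝ) ≠ 0 := ne_of_gt hposR
    rw [hphat i ω]
    have hsplit2 : ∑ τ ∈ Finset.univ.filter (fun τ : ι => c i ≤ b τ),
        (p i - Set.indicator (Set.Ioc (c (i-1)) (c i)) (fun _ => (1:ℝ)) (m τ ω)) / nn i
        = (∑ τ ∈ Finset.univ.filter (fun τ : ι => c i ≤ b τ), p i) / nn i
          - (∑ τ ∈ Finset.univ.filter (fun τ : ι => c i ≤ b τ),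
              Set.indicator (Set.Ioc (c (i-1)) (c i)) (fun _ => (1:ℝ)) (m τ ω)) / nn i := by
      rw [← Finset.sum_div, Finset.sum_sub_distrib, sub_div]
    rw [hsplit2]
    congr 1
    · rw [Finset.sum_const, ← hnn i, nsmul_eq_mul]
      field_simp
    · congr 1
      refine Eq.symm ?_
      calc ∑ τ ∈ Finset.univ.filter (fun τ : ι => c i ≤ b τ),
            Set.indicator (Set.Ioc (c (i-1)) (c i)) (fun _ => (1:ℝ)) (m τ ω)
          = ∑ τ ∈ Finset.univ.filter (fun τ : ι => c i ≤ b τ),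
            if m τ ω ∈ Set.Ioc (c (i-1)) (c i) then (1:ℝ) else 0 :=
            Finset.sum_congr rfl (fun τ _ => Set.indicator_apply _ _ _)
      _ = (((Finset.univ.filter (fun τ : ι => c i ≤ b τ)).filter
            (fun τ => m τ ω ∈ Set.Ioc (c (i-1)) (c i))).card : ℝ) := by
            rw [Finset.sum_boole]
      _ = ((Finset.univ.filter (fun τ : ι => c i ≤ b τ ∧
            m τ ω ∈ Set.Ioc (c (i-1)) (c i))).card : ℝ) := by
            rw [Finset.filter_filter]
  -- Bernstein, both tails
  have hup := bernstein_tail P (fun τ => g τ ∘ m τ) hXindep hXmeas hB hXbd hXmean hVtot hV0 hL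
  set gneg : ι → ℝ → ℝ := fun τ x => -(g τ x) with hgneg_def
  have hnXmeas : ∀ τ, Measurable (gneg τ ∘ m τ) := by
    intro τ
    simp only [hgneg_def]
    exact ((hgmeas τ).neg).comp (hmeas τ)
  have hnXindep : iIndepFun (fun τ => gneg τ ∘ m τ) P :=
    hindep.comp gneg (fun τ => by simp only [hgneg_def]; exact (hgmeas τ).neg)
  have hnXbd : ∀ τ ω, |(gneg τ ∘ m τ) ω| ≤ B := by
    intro τ ω
    have : (gneg τ ∘ m τ) ω = -((g τ ∘ m τ) ω) := rfl
    rw [this, abs_neg]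
    exact hXbd τ ω
  have hnXmean : ∀ τ, ∫ ω, (gneg τ ∘ m τ) ω ∂P = 0 := by
    intro τ
    have h0 : (fun ω => (gneg τ ∘ m τ) ω) = fun ω => -((g τ ∘ m τ) ω) := rfl
    rw [h0, integral_neg, hXmean τ, neg_zero]
  have hnVtot : ∑ τ, ∫ ω, ((gneg τ ∘ m τ) ω) ^ 2 ∂P ≤ ∑ k ∈ Finset.Icc 1 j, p k / nn k := by
    refine le_trans (le_of_eq (Finset.sum_congr rfl (fun τ _ => ?_))) hVtot
    have h0 : (fun ω => ((gneg τ ∘ m τ) ω) ^ 2) = fun ω => ((g τ ∘ m τ) ω) ^ 2 := by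
      funext ω
      have : (gneg τ ∘ m τ) ω = -((g τ ∘ m τ) ω) := rfl
      rw [this, neg_sq]
    rw [h0]
  have hdn := bernstein_tail P (fun τ => gneg τ ∘ m τ) hnXindep hnXmeas hB hnXbd hnXmean
    hnVtot hV0 hL
  -- combine the two tails
  have hconv : 8 * Real.sqrt (L * ∑ k ∈ Finset.Icc 1 j, p k / nn k) + 8 * L * B
      = 8 * Real.sqrt (L * ∑ k ∈ Finset.Icc 1 j, p k / nn k) + 8 * L / nn j := by
    rw [hB_def, mul_one_div]
  rw [hconv] at hup hdn
  have hsub2 : {ω : Ω | ¬ (|∑ i ∈ Finset.Icc 1 j, (p i - phat i ω)| ≤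
      8 * Real.sqrt (L * ∑ k ∈ Finset.Icc 1 j, p k / nn k) + 8 * L / nn j)} ⊆
      {ω : Ω | 8 * Real.sqrt (L * ∑ k ∈ Finset.Icc 1 j, p k / nn k) + 8 * L / nn j
          ≤ ∑ τ, (g τ ∘ m τ) ω} ∪
      {ω : Ω | 8 * Real.sqrt (L * ∑ k ∈ Finset.Icc 1 j, p k / nn k) + 8 * L / nn j
          ≤ ∑ τ, (gneg τ ∘ m τ) ω} := by
    intro ω hω
    simp only [Set.mem_setOf_eq, not_le] at hω
    rcases lt_abs.mp hω with h | h
    · left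
      rw [Set.mem_setOf_eq, ← hDeq ω]
      linarith
    · right
      rw [Set.mem_setOf_eq]
      have hneg : ∑ τ : ι, (gneg τ ∘ m τ) ω = -∑ τ : ι, (g τ ∘ m τ) ω := by
        rw [← Finset.sum_neg_distrib]
        exact Finset.sum_congr rfl (fun τ _ => rfl)
      rw [hneg, ← hDeq ω]
      linarith
  calc (P {ω : Ω | ¬ (|∑ i ∈ Finset.Icc 1 j, (p i - phat i ω)| ≤
        8 * Real.sqrt (L * ∑ k ∈ Finset.Icc 1 j, p k / nn k) + 8 * L / nn j)}).toReal
      ≤ ((P {ω : Ω | 8 * Real.sqrt (L * ∑ k ∈ Finset.Icc 1 j, p k / nn k) + 8 * L / nn j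
            ≤ ∑ τ, (g τ ∘ m τ) ω}) +
         (P {ω : Ω | 8 * Real.sqrt (L * ∑ k ∈ Finset.Icc 1 j, p k / nn k) + 8 * L / nn j
            ≤ ∑ τ, (gneg τ ∘ m τ) ω})).toReal := by
        apply ENNReal.toReal_mono
          (ENNReal.add_ne_top.mpr ⟨measure_ne_top _ _, measure_ne_top _ _⟩)
        exact le_trans (measure_mono hsub2) (measure_union_le _ _)
  _ = (P {ω : Ω | 8 * Real.sqrt (L * ∑ k ∈ Finset.Icc 1 j, p k / nn k) + 8 * L / nn j
            ≤ ∑ τ, (g τ ∘ m τ) ω}).toReal +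
      (P {ω : Ω | 8 * Real.sqrt (L * ∑ k ∈ Finset.Icc 1 j, p k / nn k) + 8 * L / nn j
            ≤ ∑ τ, (gneg τ ∘ m τ) ω}).toReal :=
        ENNReal.toReal_add (measure_ne_top _ _) (measure_ne_top _ _)
  _ ≤ Real.exp (-(6 * L)) + Real.exp (-(6 * L)) := add_le_add hup hdn
  _ = 2 * Real.exp (-(6 * L)) := by ring

lemma prob_compl_bound {Ω : Type*} [MeasurableSpace Ω] (P : Measure Ω)
    [IsProbabilityMeasure P] (S : Set Ω) {ε : ℝ} (h : (P Sᶜ).toReal ≤ ε) :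
    1 - ε ≤ (P S).toReal := by
  have h2 : P Set.univ ≤ P S + P Sᶜ := by
    refine le_trans (measure_mono ?_) (measure_union_le S Sᶜ)
    rw [Set.union_compl_self]
  have h3 : (1:ℝ) ≤ (P S).toReal + (P Sᶜ).toReal := by
    calc (1:ℝ) = (P Set.univ).toReal := by simp
    _ ≤ ((P S) + (P Sᶜ)).toReal :=
        ENNReal.toReal_mono (ENNReal.add_ne_top.mpr ⟨measure_ne_top _ _, measure_ne_top _ _⟩) h2
    _ = (P S).toReal + (P Sᶜ).toReal := ENNReal.toReal_add (measure_ne_top _ _) (measure_ne_top _ _)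
  linarith


/-- HOB estimation from the second-price payment: with grid points `c j = j/n`,
`n = ⌈√T⌉`, i.i.d. highest other bids `(m τ)`, deterministic grid bids `(b τ)`,
true interval probabilities `p j = P(c (j−1) < m ≤ c j)`, sample counts
`nn j = #{τ : b τ ≥ c j} ≥ 1`, and empirical interval frequencies `phat j`, with
probability at least `1 − T⁻³` the CDF partial sums and their discretized integrals are
simultaneously estimated to accuracy `8√(log T · ∑_{k≤j} p k / nn k) + 8 log T / nn j`
for every `j ∈ {1, …, n}`. -/
theorem hob_estimation_from_payment (T : ℕ) (hT : 2 ≤ T)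
    {Ω : Type*} [MeasurableSpace Ω] (P : Measure Ω) [IsProbabilityMeasure P]
    {ι : Type*} [Fintype ι]
    (n : ℕ) (hn : n = ⌈Real.sqrt T⌉₊)
    (c : ℕ → ℝ) (hc : ∀ i, c i = (i : ℝ) / n)
    (m : ι → Ω → ℝ) (hmeas : ∀ τ, Measurable (m τ))
    (hrange : ∀ τ ω, m τ ω ∈ Set.Icc (0:ℝ) 1)
    (hindep : iIndepFun m P)
    (μ : Measure ℝ) (hdist : ∀ τ, Measure.map (m τ) P = μ)
    (b : ι → ℝ) (hbgrid : ∀ τ, ∃ i ≤ n, b τ = c i)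
    (p : ℕ → ℝ) (hp : ∀ j, p j = (μ (Set.Ioc (c (j - 1)) (c j))).toReal)
    (nn : ℕ → ℕ)
    (hnn : ∀ j, nn j = (Finset.univ.filter (fun τ : ι => c j ≤ b τ)).card)
    (hnn1 : ∀ j, 1 ≤ j → j ≤ n → 1 ≤ nn j)
    (phat : ℕ → Ω → ℝ)
    (hphat : ∀ j ω, phat j ω =
      ((Finset.univ.filter
          (fun τ : ι => c j ≤ b τ ∧ m τ ω ∈ Set.Ioc (c (j - 1)) (c j))).card : ℝ) / nn j) :
    1 - ((T : ℝ) ^ 3)⁻¹ ≤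
      (P {ω | ∀ j, 1 ≤ j → j ≤ n →
        |∑ i ∈ Finset.Icc 1 j, (p i - phat i ω)| ≤
            8 * Real.sqrt (Real.log T * ∑ k ∈ Finset.Icc 1 j, p k / nn k)
              + 8 * Real.log T / nn j ∧
        (1 / (n : ℝ)) * |∑ i ∈ Finset.Icc 1 j, ∑ k ∈ Finset.Icc 1 i, (p k - phat k ω)| ≤
            8 * Real.sqrt (Real.log T * ∑ k ∈ Finset.Icc 1 j, p k / nn k)
              + 8 * Real.log T / nn j}).toReal := by
  classical
  have hT2 : (2:ℝ) ≤ (T:ℝ) := by exact_mod_cast hT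
  have hT1 : (1:ℝ) < T := by linarith
  set L := Real.log (T:ℝ) with hL_def
  have hL : 0 < L := Real.log_pos hT1
  have hn1 : 1 ≤ n := by
    rw [hn]
    exact Nat.one_le_iff_ne_zero.mpr (by
      simp only [ne_eq, Nat.ceil_eq_zero, not_le]
      exact Real.sqrt_pos.mpr (by linarith))
  have hnR : (0:ℝ) < n := by exact_mod_cast hn1
  have hcm : ∀ {a b : ℕ}, a ≤ b → c a ≤ c b := by
    intro a b hab
    rw [hc a, hc b]
    have hab' : (a:ℝ) ≤ (b:ℝ) := by exact_mod_cast hab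
    gcongr
  have hnn_le : ∀ {a b : ℕ}, a ≤ b → nn b ≤ nn a := by
    intro a b hab
    rw [hnn, hnn]
    apply Finset.card_le_card
    intro τ hτ
    simp only [mem_filter, mem_univ, true_and] at *
    exact le_trans (hcm hab) hτ
  have hι : Nonempty ι := by
    have h1 := hnn1 1 le_rfl hn1
    rw [hnn] at h1
    rcases Finset.card_pos.mp h1 with ⟨τ, _⟩
    exact ⟨τ⟩
  obtain ⟨τ₀⟩ := hι
  have hμprob : IsProbabilityMeasure μ := by
    rw [← hdist τ₀]; exact Measure.isProbabilityMeasure_map (hmeas τ₀).aemeasurable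
  have hexcl : ∀ {i i' : ℕ} (x : ℝ), 1 ≤ i → 1 ≤ i' → i ≠ i' →
      x ∈ Set.Ioc (c (i-1)) (c i) → x ∈ Set.Ioc (c (i'-1)) (c i')  → False := by
    intro i i' x hi hi' hne hx hx'
    rcases lt_or_gt_of_ne hne with h | h
    · have hle : c i ≤ c (i'-1) := hcm (by omega)
      exact absurd hx'.1 (not_lt.mpr (le_trans hx.2 hle))
    · have hle : c i' ≤ c (i-1) := hcm (by omega)
      exact absurd hx.1 (not_lt.mpr (le_trans hx'.2 hle))
  have hp0 : ∀ i, 0 ≤ p i := fun i => by rw [hp]; exact ENNReal.toReal_nonneg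
  have hpsum : ∀ j, ∑ i ∈ Finset.Icc 1 j, p i ≤ 1 := by
    intro j
    have hdisj : (↑(Finset.Icc 1 j) : Set ℕ).PairwiseDisjoint
        (fun i => Set.Ioc (c (i-1)) (c i)) := by
      intro a ha b' hb' hab
      simp only [Finset.coe_Icc, Set.mem_Icc] at ha hb'
      exact Set.disjoint_left.mpr (fun x hx hx' => hexcl x ha.1 hb'.1 hab hx hx')
    have hmeq := measure_biUnion_finset hdisj
      (fun i _ => (measurableSet_Ioc : MeasurableSet (Set.Ioc (c (i-1)) (c i)))) (μ := μ)
    calc ∑ i ∈ Finset.Icc 1 j, p i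
        = (∑ i ∈ Finset.Icc 1 j, μ (Set.Ioc (c (i-1)) (c i))).toReal := by
          rw [ENNReal.toReal_sum (fun a _ => measure_ne_top μ _)]
          exact Finset.sum_congr rfl (fun i _ => hp i)
    _ = (μ (⋃ i ∈ Finset.Icc 1 j, Set.Ioc (c (i-1)) (c i))).toReal := by rw [hmeq]
    _ ≤ (1 : ℝ≥0∞).toReal := ENNReal.toReal_mono (by norm_num) prob_le_one
    _ = 1 := by simp
  -- the per-j tail bound
  have hbadj : ∀ j, 1 ≤ j → j ≤ n →
      (P {ω | ¬ (|∑ i ∈ Finset.Icc 1 j, (p i - phat i ω)| ≤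
        8 * Real.sqrt (L * ∑ k ∈ Finset.Icc 1 j, p k / nn k) + 8 * L / nn j)}).toReal ≤
      2 * Real.exp (-(6 * L)) := by
    intro j hj1 hjn
    exact per_j_bound P c m hmeas hindep μ hdist b p hp nn hnn phat hphat L hL j hj1
      (hnn1 j hj1 hjn) (fun i h1 h2 => hnn_le h2) hexcl (hpsum j) hp0
  -- RHS nonneg and monotone
  have ht0 : ∀ j, 0 ≤ 8 * Real.sqrt (L * ∑ k ∈ Finset.Icc 1 j, p k / nn k) + 8 * L / nn j :=
    fun j => add_nonneg (by positivity)
      (div_nonneg (by linarith) (Nat.cast_nonneg _))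
  have htmono : ∀ i j, 1 ≤ i → i ≤ j → j ≤ n →
      8 * Real.sqrt (L * ∑ k ∈ Finset.Icc 1 i, p k / nn k) + 8 * L / nn i ≤
      8 * Real.sqrt (L * ∑ k ∈ Finset.Icc 1 j, p k / nn k) + 8 * L / nn j := by
    intro i j hi1 hij hjn
    have hnnj : 1 ≤ nn j := hnn1 j (le_trans hi1 hij) hjn
    have hnnjR : (0:ℝ) < nn j := by exact_mod_cast hnnj
    have hnnij : (nn j : ℝ) ≤ nn i := by exact_mod_cast hnn_le hij
    have h1 : Real.sqrt (L * ∑ k ∈ Finset.Icc 1 i, p k / nn k) ≤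
        Real.sqrt (L * ∑ k ∈ Finset.Icc 1 j, p k / nn k) := by
      apply Real.sqrt_le_sqrt
      apply mul_le_mul_of_nonneg_left _ hL.le
      exact Finset.sum_le_sum_of_subset_of_nonneg
        (Finset.Icc_subset_Icc_right hij)
        (fun k _ _ => div_nonneg (hp0 k) (Nat.cast_nonneg _))
    have h2 : 8 * L / (nn i : ℝ) ≤ 8 * L / nn j := by
      apply div_le_div_of_nonneg_left (by linarith) hnnjR hnnij
    linarith
  -- assemble
  apply prob_compl_bound
  have hsub : {ω : Ω | ∀ j, 1 ≤ j → j ≤ n →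
        |∑ i ∈ Finset.Icc 1 j, (p i - phat i ω)| ≤
            8 * Real.sqrt (L * ∑ k ∈ Finset.Icc 1 j, p k / nn k) + 8 * L / nn j ∧
        (1 / (n : ℝ)) * |∑ i ∈ Finset.Icc 1 j, ∑ k ∈ Finset.Icc 1 i, (p k - phat k ω)| ≤
            8 * Real.sqrt (L * ∑ k ∈ Finset.Icc 1 j, p k / nn k) + 8 * L / nn j}ᶜ ⊆
      ⋃ j ∈ Finset.Icc 1 n, {ω : Ω | ¬ (|∑ i ∈ Finset.Icc 1 j, (p i - phat i ω)| ≤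
        8 * Real.sqrt (L * ∑ k ∈ Finset.Icc 1 j, p k / nn k) + 8 * L / nn j)} := by
    intro ω hω
    simp only [Set.mem_compl_iff, Set.mem_setOf_eq] at hω
    by_contra hcon
    simp only [Set.mem_iUnion, Set.mem_setOf_eq, not_exists, not_not, Finset.mem_Icc] at hcon
    apply hω
    intro j hj1 hjn
    have hDj : ∀ i, 1 ≤ i → i ≤ j → |∑ k ∈ Finset.Icc 1 i, (p k - phat k ω)| ≤
        8 * Real.sqrt (L * ∑ k ∈ Finset.Icc 1 i, p k / nn k) + 8 * L / nn i :=
      fun i h1 h2 => hcon i ⟨h1, le_trans h2 hjn⟩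
    refine ⟨hDj j hj1 le_rfl, ?_⟩
    calc (1 / (n : ℝ)) * |∑ i ∈ Finset.Icc 1 j, ∑ k ∈ Finset.Icc 1 i, (p k - phat k ω)|
        ≤ (1 / (n : ℝ)) * ∑ i ∈ Finset.Icc 1 j, |∑ k ∈ Finset.Icc 1 i, (p k - phat k ω)| := by
          apply mul_le_mul_of_nonneg_left (Finset.abs_sum_le_sum_abs _ _) (by positivity)
    _ ≤ (1 / (n : ℝ)) * ∑ i ∈ Finset.Icc 1 j,
          (8 * Real.sqrt (L * ∑ k ∈ Finset.Icc 1 j, p k / nn k) + 8 * L / nn j) := by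
          apply mul_le_mul_of_nonneg_left _ (by positivity)
          apply Finset.sum_le_sum
          intro i hi
          rcases Finset.mem_Icc.mp hi with ⟨h1, h2⟩
          exact le_trans (hDj i h1 h2) (htmono i j h1 h2 hjn)
    _ = (1 / (n : ℝ)) * (j *
          (8 * Real.sqrt (L * ∑ k ∈ Finset.Icc 1 j, p k / nn k) + 8 * L / nn j)) := by
          rw [Finset.sum_const, Nat.card_Icc, nsmul_eq_mul]
          norm_num
    _ ≤ 8 * Real.sqrt (L * ∑ k ∈ Finset.Icc 1 j, p k / nn k) + 8 * L / nn j := by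
          have hjle : (j : ℝ) ≤ n := by exact_mod_cast hjn
          have h0 := ht0 j
          set X := 8 * Real.sqrt (L * ∑ k ∈ Finset.Icc 1 j, p k / nn k) + 8 * L / nn j with hX
          calc (1/(n:ℝ)) * ((j:ℝ) * X) ≤ (1/(n:ℝ)) * ((n:ℝ) * X) := by
                apply mul_le_mul_of_nonneg_left (mul_le_mul_of_nonneg_right hjle h0) (by positivity)
          _ = X := by field_simp
  calc (P {ω : Ω | ∀ j, 1 ≤ j → j ≤ n →
        |∑ i ∈ Finset.Icc 1 j, (p i - phat i ω)| ≤
            8 * Real.sqrt (L * ∑ k ∈ Finset.Icc 1 j, p k / nn k) + 8 * L / nn j ∧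
        (1 / (n : ℝ)) * |∑ i ∈ Finset.Icc 1 j, ∑ k ∈ Finset.Icc 1 i, (p k - phat k ω)| ≤
            8 * Real.sqrt (L * ∑ k ∈ Finset.Icc 1 j, p k / nn k) + 8 * L / nn j}ᶜ).toReal
      ≤ (∑ j ∈ Finset.Icc 1 n, P {ω : Ω | ¬ (|∑ i ∈ Finset.Icc 1 j, (p i - phat i ω)| ≤
        8 * Real.sqrt (L * ∑ k ∈ Finset.Icc 1 j, p k / nn k) + 8 * L / nn j)}).toReal := by
        apply ENNReal.toReal_mono
        · exact (ENNReal.sum_lt_top.mpr (fun j _ => measure_lt_top P _)).ne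
        · exact le_trans (measure_mono hsub) (measure_biUnion_finset_le _ _)
  _ = ∑ j ∈ Finset.Icc 1 n, (P {ω : Ω | ¬ (|∑ i ∈ Finset.Icc 1 j, (p i - phat i ω)| ≤
        8 * Real.sqrt (L * ∑ k ∈ Finset.Icc 1 j, p k / nn k) + 8 * L / nn j)}).toReal :=
        ENNReal.toReal_sum (fun j _ => measure_ne_top _ _)
  _ ≤ ∑ j ∈ Finset.Icc 1 n, 2 * Real.exp (-(6 * L)) := by
        apply Finset.sum_le_sum
        intro j hj
        rcases Finset.mem_Icc.mp hj with ⟨h1, h2⟩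
        exact hbadj j h1 h2
  _ = (n : ℝ) * (2 * Real.exp (-(6 * L))) := by
        rw [Finset.sum_const, Nat.card_Icc, nsmul_eq_mul]
        norm_num
  _ ≤ ((T : ℝ) ^ 3)⁻¹ := by
        have hnT : (n : ℝ) ≤ T := by
          rw [hn]
          have h1 : Real.sqrt T ≤ (T:ℝ) := by
            have h2 := Real.sqrt_le_sqrt (show (T:ℝ) ≤ (T:ℝ)^2 by nlinarith)
            rwa [Real.sqrt_sq (by linarith)] at h2
          have := Nat.ceil_le.mpr h1
          exact_mod_cast this
        have hexp : Real.exp (-(6 * L)) = ((T:ℝ) ^ 6)⁻¹ := by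
          rw [Real.exp_neg]
          congr 1
          rw [show (6:ℝ) * L = (6:ℕ) * L by norm_num, Real.exp_nat_mul, hL_def,
            Real.exp_log (by linarith)]
        rw [hexp,
          show (n:ℝ) * (2*((T:ℝ)^6)⁻¹) = ((n:ℝ)*2)/((T:ℝ)^6) by ring,
          show ((T:ℝ)^3)⁻¹ = ((T:ℝ)^3)/((T:ℝ)^6) by field_simp]
        gcongr
        nlinarith [hnT, hT2, mul_nonneg (mul_nonneg
          (by linarith : (0:ℝ) ≤ (T:ℝ)-2) (by linarith : (0:ℝ) ≤ (T:ℝ)))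
          (by linarith : (0:ℝ) ≤ (T:ℝ))]
end

section
/- Let d ≥ 1 and T ≥ 2 be integers and Φ a finite index set. For each τ ∈ Φ let x_τ ∈ ℝ^d with ‖x_τ‖₂ ≤ 1, b_τ ∈ [0,1], g_τ ∈ (0,1) and u_τ ≥ 0 be deterministic. Let ((m_τ, v_{τ,1}, v_{τ,0}))_{τ∈Φ} be independent random triples with values in [0,1]³ such that for each τ the pair (v_{τ,1}, v_{τ,0}) is independent of m_τ, |P(m_τ ≤ b_τ) − g_τ| ≤ u_τ, and E[v_{τ,1} − v_{τ,0}] = θ*ᵀx_τ for a fixed θ* ∈ ℝ^d with ‖θ*‖₂ ≤ 1. Define σ_τ = 1/(g_τ(1−g_τ)), the IPW estimator ẽ_τ = 𝟙[m_τ ≤ b_τ]·v_{τ,1}/g_τ − 𝟙[m_τ > b_τ]·v_{τ,0}/(1−g_τ), the Gram matrix A = I_d + Σ_{τ∈Φ} σ_τ^{−2} x_τ x_τᵀ, the weighted ridge estimator θ̂ = A^{−1} Σ_{τ∈Φ} σ_τ^{−2} x_τ ẽ_τ, and γ = 1 + 14·log T + 4·√(Σ_{τ∈Φ} u_τ²).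 Then for any fixed x ∈ ℝ^d with ‖x‖₂ ≤ 1, with probability at least 1 − T^{−3}, |θ̂ᵀx − θ*ᵀx| ≤ γ·√(xᵀ A^{−1} x). -/
open MeasureTheory ProbabilityTheory Matrix Finset

lemma wls_integrable_of_abs_le {Ω : Type*} [MeasurableSpace Ω] (P : Measure Ω)
    [IsProbabilityMeasure P] {f : Ω → ℝ} (hf : Measurable f) {C : ℝ}
    (h : ∀ ω, |f ω| ≤ C) : Integrable f P :=
  (integrable_const C).mono' hf.aestronglyMeasurable (Filter.Eventually.of_forall fun ω => by
    simpa using h ω)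

lemma wls_mgf_le_exp_half_sq {Ω : Type*} [MeasurableSpace Ω] (P : Measure Ω)
    [IsProbabilityMeasure P] {Y : Ω → ℝ} (hY : Measurable Y) {c : ℝ} (hc : 0 ≤ c)
    (hb : ∀ ω, |Y ω| ≤ c) (h0 : ∫ ω, Y ω ∂P = 0) (t : ℝ) :
    mgf Y P t ≤ Real.exp (t ^ 2 * c ^ 2 / 2) := by
  rcases eq_or_lt_of_le hc with hc0 | hcpos
  · have hzero : ∀ ω, Y ω = 0 := fun ω => abs_eq_zero.mp (le_antisymm (hc0 ▸ hb ω) (abs_nonneg _))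
    have : mgf Y P t = 1 := by
      unfold mgf
      simp only [hzero]
      simp
    rw [this]
    exact Real.one_le_exp (by positivity)
  · set α : ℝ := (Real.exp (t * c) + Real.exp (-(t * c))) / 2 with hα
    set β : ℝ := (Real.exp (t * c) - Real.exp (-(t * c))) / (2 * c) with hβ
    have hpt : ∀ ω, Real.exp (t * Y ω) ≤ α + β * Y ω := by
      intro ω
      have h1 : Y ω ≤ c := (abs_le.mp (hb ω)).2
      have h2 : -c ≤ Y ω := (abs_le.mp (hb ω)).1
      have hcne : (2 * c : ℝ) ≠ 0 := by positivity
      have hlam1 : (0:ℝ) ≤ (c - Y ω) / (2 * c) := div_nonneg (by linarith) (by linarith)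
      have hlam2 : (0:ℝ) ≤ (c + Y ω) / (2 * c) := div_nonneg (by linarith) (by linarith)
      have hsum : (c - Y ω) / (2 * c) + (c + Y ω) / (2 * c) = 1 := by
        field_simp; ring
      have hconv := convexOn_exp.2 (Set.mem_univ (-(t*c))) (Set.mem_univ (t*c))
        hlam1 hlam2 hsum
      simp only [smul_eq_mul] at hconv
      have harg : (c - Y ω) / (2 * c) * (-(t*c)) + (c + Y ω) / (2 * c) * (t*c) = t * Y ω := by
        rw [div_mul_eq_mul_div, div_mul_eq_mul_div, ← add_div, div_eq_iff hcne]
        ring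
      rw [harg] at hconv
      refine hconv.trans ?_
      have hrhs : (c - Y ω) / (2 * c) * Real.exp (-(t*c)) + (c + Y ω) / (2 * c) * Real.exp (t*c)
          = α + β * Y ω := by
        rw [hα, hβ]
        field_simp
        ring
      rw [hrhs]
    have hIntY : Integrable Y P := wls_integrable_of_abs_le P hY hb
    have hIntExp : Integrable (fun ω => Real.exp (t * Y ω)) P := by
      refine wls_integrable_of_abs_le P (by measurability) (C := Real.exp (|t| * c)) fun ω => ?_
      rw [abs_of_pos (Real.exp_pos _)]
      apply Real.exp_le_exp.mpr
      calc t * Y ω ≤ |t * Y ω| := le_abs_self _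
        _ = |t| * |Y ω| := abs_mul _ _
        _ ≤ |t| * c := by
            exact mul_le_mul_of_nonneg_left (hb ω) (abs_nonneg t)
    have hmgf : mgf Y P t ≤ α := by
      unfold mgf
      have : ∫ ω, Real.exp (t * Y ω) ∂P ≤ ∫ ω, (α + β * Y ω) ∂P := by
        apply integral_mono hIntExp ((integrable_const α).add (hIntY.const_mul β)) hpt
      rwa [integral_add (integrable_const α) (hIntY.const_mul β), integral_const_mul, h0,
        mul_zero, add_zero, integral_const, probReal_univ, smul_eq_mul,
        one_mul] at this
    have hcosh : α = Real.cosh (t * c) := by rw [Real.cosh_eq]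
    calc mgf Y P t ≤ α := hmgf
      _ = Real.cosh (t * c) := hcosh
      _ ≤ Real.exp ((t * c) ^ 2 / 2) := Real.cosh_le_exp_half_sq _
      _ = Real.exp (t ^ 2 * c ^ 2 / 2) := by ring_nf

set_option maxHeartbeats 4000000 in
/-- Weighted-least-squares error bound for joint treatment-effect estimation in second-price
auctions: the treatment effect `v1 τ − v0 τ` has linear mean `θstar ⬝ x τ`, the propensity
score `P(m τ ≤ b τ)` is approximated by `g τ` with error at most `u τ`, and `θhat` solves the
`(σ τ)⁻²`-weighted ridge regression of the IPW estimators `e τ` on the contexts `x τ`; then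
with probability at least `1 − T⁻³`, `|θhat ⬝ x − θstar ⬝ x| ≤ γ √(xᵀ A⁻¹ x)`. -/
theorem wls_error_bound (d T : ℕ) (hd : 1 ≤ d) (hT : 2 ≤ T)
    {Ω : Type*} [MeasurableSpace Ω] (P : Measure Ω) [IsProbabilityMeasure P]
    {ι : Type*} [Fintype ι]
    (x : ι → Fin d → ℝ) (hx : ∀ τ, x τ ⬝ᵥ x τ ≤ 1)
    (b : ι → ℝ) (hb : ∀ τ, b τ ∈ Set.Icc (0:ℝ) 1)
    (g : ι → ℝ) (hg : ∀ τ, g τ ∈ Set.Ioo (0:ℝ) 1)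
    (u : ι → ℝ) (hu : ∀ τ, 0 ≤ u τ)
    (m v1 v0 : ι → Ω → ℝ)
    (hmeas : ∀ τ, Measurable (m τ) ∧ Measurable (v1 τ) ∧ Measurable (v0 τ))
    (hrange : ∀ τ ω, m τ ω ∈ Set.Icc (0:ℝ) 1 ∧ v1 τ ω ∈ Set.Icc (0:ℝ) 1 ∧
        v0 τ ω ∈ Set.Icc (0:ℝ) 1)
    (hindep : iIndepFun (fun τ ω => (m τ ω, v1 τ ω, v0 τ ω)) P)
    (hindep2 : ∀ τ, IndepFun (fun ω => (v1 τ ω, v0 τ ω)) (m τ) P)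
    (hprop : ∀ τ, |(P {ω | m τ ω ≤ b τ}).toReal - g τ| ≤ u τ)
    (θstar : Fin d → ℝ) (hθ : θstar ⬝ᵥ θstar ≤ 1)
    (hmean : ∀ τ, ∫ ω, (v1 τ ω - v0 τ ω) ∂P = θstar ⬝ᵥ x τ)
    (σ : ι → ℝ) (hσ : ∀ τ, σ τ = 1 / (g τ * (1 - g τ)))
    (e : ι → Ω → ℝ)
    (he : ∀ τ ω, e τ ω = (if m τ ω ≤ b τ then v1 τ ω / g τ else 0)
        - (if b τ < m τ ω then v0 τ ω / (1 - g τ) else 0))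
    (A : Matrix (Fin d) (Fin d) ℝ)
    (hA : A = 1 + ∑ τ : ι, (σ τ ^ 2)⁻¹ • vecMulVec (x τ) (x τ))
    (θhat : Ω → Fin d → ℝ)
    (hθhat : ∀ ω, θhat ω = A⁻¹ *ᵥ (∑ τ : ι, ((σ τ ^ 2)⁻¹ * e τ ω) • x τ))
    (γ : ℝ) (hγ : γ = 1 + 14 * Real.log T + 4 * Real.sqrt (∑ τ : ι, u τ ^ 2))
    (xq : Fin d → ℝ) (hxq : xq ⬝ᵥ xq ≤ 1) :
    1 - ((T : ℝ) ^ 3)⁻¹ ≤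
      (P {ω | |θhat ω ⬝ᵥ xq - θstar ⬝ᵥ xq| ≤
          γ * Real.sqrt (xq ⬝ᵥ (A⁻¹ *ᵥ xq))}).toReal := by
  classical
  -- basic facts about σ and g
  have hgpos : ∀ τ, 0 < g τ := fun τ => (hg τ).1
  have hg1 : ∀ τ, g τ < 1 := fun τ => (hg τ).2
  have hσpos : ∀ τ, 0 < σ τ := by
    intro τ; rw [hσ τ]; exact one_div_pos.mpr (mul_pos (hgpos τ) (by linarith [hg1 τ]))
  -- matrix preliminaries
  have hdotsum : ∀ (z : Fin d → ℝ) (f : ι → Fin d → ℝ),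
      z ⬝ᵥ (∑ τ : ι, f τ) = ∑ τ : ι, z ⬝ᵥ f τ := by
    intro z f
    simp only [dotProduct, Finset.sum_apply, Finset.mul_sum]
    exact Finset.sum_comm
  have hSsum : ∀ v : Fin d → ℝ,
      (∑ τ : ι, (σ τ ^ 2)⁻¹ • vecMulVec (x τ) (x τ)) *ᵥ v
        = ∑ τ : ι, ((σ τ ^ 2)⁻¹ * (x τ ⬝ᵥ v)) • x τ := by
    intro v
    ext i
    simp only [Matrix.mulVec, dotProduct, Matrix.sum_apply, Matrix.smul_apply,
      vecMulVec_apply, smul_eq_mul, Finset.sum_apply, Pi.smul_apply, Finset.sum_mul,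
      Finset.mul_sum]
    rw [Finset.sum_comm]
    refine Finset.sum_congr rfl fun τ _ => Finset.sum_congr rfl fun j _ => by ring
  have hdot_smul : ∀ (z v : Fin d → ℝ) (c : ℝ), z ⬝ᵥ (c • v) = c * (z ⬝ᵥ v) := by
    intro z v c
    rw [dotProduct_smul, smul_eq_mul]
  have hAdot : ∀ z v : Fin d → ℝ, z ⬝ᵥ (A *ᵥ v)
      = z ⬝ᵥ v + ∑ τ : ι, (σ τ ^ 2)⁻¹ * ((z ⬝ᵥ x τ) * (x τ ⬝ᵥ v)) := by
    intro z v
    rw [hA, add_mulVec, one_mulVec, dotProduct_add, hSsum, hdotsum]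
    congr 1
    refine Finset.sum_congr rfl fun τ _ => ?_
    rw [hdot_smul]
    ring
  have hAsymm : Aᵀ = A := by
    rw [hA, Matrix.transpose_add, Matrix.transpose_one, Matrix.transpose_sum]
    congr 1
    refine Finset.sum_congr rfl fun τ _ => ?_
    rw [Matrix.transpose_smul]
    congr 1
    ext i j
    simp only [Matrix.transpose_apply, vecMulVec_apply]
    ring
  have hApos : A.PosDef := by
    rw [hA]
    refine Matrix.PosDef.add_posSemidef Matrix.PosDef.one (Matrix.PosSemidef.of_dotProduct_mulVec_nonneg ?_ ?_)
    · show _ = _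
      ext i j
      simp only [Matrix.conjTranspose_apply, Matrix.sum_apply, Matrix.smul_apply,
        vecMulVec_apply, smul_eq_mul, star_trivial]
      refine Finset.sum_congr rfl fun τ _ => by ring
    · intro v
      have hv : star v = v := by simp
      rw [hv, hSsum, hdotsum]
      refine Finset.sum_nonneg fun τ _ => ?_
      rw [hdot_smul, dotProduct_comm, mul_assoc]
      exact mul_nonneg (inv_nonneg.mpr (sq_nonneg _)) (mul_self_nonneg _)
  have hdet : IsUnit A.det := isUnit_iff_ne_zero.mpr (ne_of_gt hApos.det_pos)
  have hAinvmul : A * A⁻¹ = 1 := Matrix.mul_nonsing_inv A hdet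
  have hAinvT : A⁻¹ᵀ = A⁻¹ := by rw [Matrix.transpose_nonsing_inv, hAsymm]
  set y : Fin d → ℝ := A⁻¹ *ᵥ xq with hy
  set s2 : ℝ := xq ⬝ᵥ (A⁻¹ *ᵥ xq) with hs2def
  have hAy : A *ᵥ y = xq := by
    rw [hy, Matrix.mulVec_mulVec, hAinvmul, one_mulVec]
  set V : ℝ := ∑ τ : ι, (σ τ ^ 2)⁻¹ * (x τ ⬝ᵥ y) ^ 2 with hVdef
  have hVnn : 0 ≤ V := Finset.sum_nonneg fun τ _ => by positivity
  have hs2split : s2 = y ⬝ᵥ y + V := by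
    have h1 : y ⬝ᵥ (A *ᵥ y) = s2 := by rw [hAy, dotProduct_comm, hs2def, hy]
    rw [hAdot y y] at h1
    rw [← h1, hVdef]
    congr 1
    refine Finset.sum_congr rfl fun τ _ => ?_
    rw [dotProduct_comm (x τ) y]
    ring
  have hynn : 0 ≤ y ⬝ᵥ y := by
    have : (0:ℝ) ≤ ∑ i, y i * y i := Finset.sum_nonneg fun i _ => mul_self_nonneg _
    simpa [dotProduct] using this
  have hs2nn : 0 ≤ s2 := by rw [hs2split]; positivity
  -- measurability and bounds for e
  have hmm : ∀ τ, Measurable (m τ) := fun τ => (hmeas τ).1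
  have hm1 : ∀ τ, Measurable (v1 τ) := fun τ => (hmeas τ).2.1
  have hm0 : ∀ τ, Measurable (v0 τ) := fun τ => (hmeas τ).2.2
  have hemeas : ∀ τ, Measurable (e τ) := by
    intro τ
    have heq : e τ = fun ω => (if m τ ω ≤ b τ then v1 τ ω / g τ else 0)
        - (if b τ < m τ ω then v0 τ ω / (1 - g τ) else 0) := funext (he τ)
    rw [heq]
    exact ((Measurable.ite (measurableSet_le (hmm τ) measurable_const)
      ((hm1 τ).div_const _) measurable_const).sub
      (Measurable.ite (measurableSet_lt measurable_const (hmm τ))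
      ((hm0 τ).div_const _) measurable_const))
  have hebound : ∀ τ ω, -(1 - g τ)⁻¹ ≤ e τ ω ∧ e τ ω ≤ (g τ)⁻¹ := by
    intro τ ω
    have h1 := (hrange τ ω).2.1
    have h0 := (hrange τ ω).2.2
    have hgp := hgpos τ
    have hg1' : 0 < 1 - g τ := by linarith [hg1 τ]
    rw [he τ ω]
    have ht1 : (0:ℝ) ≤ (if m τ ω ≤ b τ then v1 τ ω / g τ else 0) := by
      split_ifs with h
      · exact div_nonneg h1.1 hgp.le
      · exact le_refl 0
    have ht1' : (if m τ ω ≤ b τ then v1 τ ω / g τ else 0) ≤ (g τ)⁻¹ := by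
      split_ifs with h
      · rw [div_le_iff₀ hgp, inv_mul_cancel₀ hgp.ne']
        exact h1.2
      · positivity
    have ht0 : (0:ℝ) ≤ (if b τ < m τ ω then v0 τ ω / (1 - g τ) else 0) := by
      split_ifs with h
      · exact div_nonneg h0.1 hg1'.le
      · exact le_refl 0
    have ht0' : (if b τ < m τ ω then v0 τ ω / (1 - g τ) else 0) ≤ (1 - g τ)⁻¹ := by
      split_ifs with h
      · rw [div_le_iff₀ hg1', inv_mul_cancel₀ hg1'.ne']
        exact h0.2
      · positivity
    constructor <;> linarith
  have heabs : ∀ τ ω, |e τ ω| ≤ σ τ := by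
    intro τ ω
    have h := hebound τ ω
    have hgp := hgpos τ
    have hg1' : 0 < 1 - g τ := by linarith [hg1 τ]
    have hσval : σ τ = (g τ)⁻¹ + (1 - g τ)⁻¹ := by
      rw [hσ τ]; field_simp; ring
    rw [abs_le]
    constructor
    · refine le_trans ?_ h.1
      rw [hσval]
      have : (0:ℝ) < (g τ)⁻¹ := by positivity
      linarith
    · refine h.2.trans ?_
      rw [hσval]
      have : (0:ℝ) < (1 - g τ)⁻¹ := by positivity
      linarith
  -- integrability
  have hIv1 : ∀ τ, Integrable (v1 τ) P := fun τ =>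
    wls_integrable_of_abs_le P (hm1 τ) (C := 1) fun ω =>
      abs_le.mpr ⟨by linarith [(hrange τ ω).2.1.1], (hrange τ ω).2.1.2⟩
  have hIv0 : ∀ τ, Integrable (v0 τ) P := fun τ =>
    wls_integrable_of_abs_le P (hm0 τ) (C := 1) fun ω =>
      abs_le.mpr ⟨by linarith [(hrange τ ω).2.2.1], (hrange τ ω).2.2.2⟩
  have hIe : ∀ τ, Integrable (e τ) P := fun τ =>
    wls_integrable_of_abs_le P (hemeas τ) (heabs τ)
  -- the propensity indicator
  set I : ι → Ω → ℝ := fun τ ω => if m τ ω ≤ b τ then (1:ℝ) else 0 with hIdef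
  have hImeas : ∀ τ, Measurable (I τ) := fun τ =>
    Measurable.ite (measurableSet_le (hmm τ) measurable_const)
      measurable_const measurable_const
  have hIabs : ∀ τ ω, |I τ ω| ≤ 1 := by
    intro τ ω
    simp only [hIdef]
    split_ifs <;> simp
  have hIint : ∀ τ, Integrable (I τ) P := fun τ =>
    wls_integrable_of_abs_le P (hImeas τ) (hIabs τ)
  set p : ι → ℝ := fun τ => (P {ω | m τ ω ≤ b τ}).toReal with hpdef
  have hpI : ∀ τ, ∫ ω, I τ ω ∂P = p τ := by
    intro τ
    have hSm : MeasurableSet {ω | m τ ω ≤ b τ} :=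
      measurableSet_le (hmm τ) measurable_const
    have : (fun ω => I τ ω)
        = Set.indicator {ω | m τ ω ≤ b τ} (fun _ => (1:ℝ)) := by
      ext ω
      simp [hIdef, Set.indicator_apply, Set.mem_setOf_eq]
    rw [this, MeasureTheory.integral_indicator_const _ hSm, hpdef, smul_eq_mul, mul_one]
    rfl
  -- independence of values and indicator
  have hIndv1 : ∀ τ, IndepFun (v1 τ) (I τ) P := by
    intro τ
    have hφ : Measurable (fun r : ℝ => if r ≤ b τ then (1:ℝ) else 0) :=
      Measurable.ite measurableSet_Iic measurable_const measurable_const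
    exact (hindep2 τ).comp measurable_fst hφ
  have hIndv0 : ∀ τ, IndepFun (v0 τ) (I τ) P := by
    intro τ
    have hφ : Measurable (fun r : ℝ => if r ≤ b τ then (1:ℝ) else 0) :=
      Measurable.ite measurableSet_Iic measurable_const measurable_const
    exact (hindep2 τ).comp measurable_snd hφ
  set E1 : ι → ℝ := fun τ => ∫ ω, v1 τ ω ∂P with hE1def
  set E0 : ι → ℝ := fun τ => ∫ ω, v0 τ ω ∂P with hE0def
  have hE1mem : ∀ τ, 0 ≤ E1 τ ∧ E1 τ ≤ 1 := by
    intro τ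
    constructor
    · exact integral_nonneg fun ω => (hrange τ ω).2.1.1
    · calc ∫ ω, v1 τ ω ∂P ≤ ∫ _, (1:ℝ) ∂P :=
            integral_mono (hIv1 τ) (integrable_const 1) fun ω => (hrange τ ω).2.1.2
        _ = 1 := by simp
  have hE0mem : ∀ τ, 0 ≤ E0 τ ∧ E0 τ ≤ 1 := by
    intro τ
    constructor
    · exact integral_nonneg fun ω => (hrange τ ω).2.2.1
    · calc ∫ ω, v0 τ ω ∂P ≤ ∫ _, (1:ℝ) ∂P :=
            integral_mono (hIv0 τ) (integrable_const 1) fun ω => (hrange τ ω).2.2.2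
        _ = 1 := by simp
  have hpmem : ∀ τ, 0 ≤ p τ ∧ p τ ≤ 1 := by
    intro τ
    refine ⟨ENNReal.toReal_nonneg, ?_⟩
    rw [hpdef]
    have h1 : P {ω | m τ ω ≤ b τ} ≤ 1 := prob_le_one
    exact_mod_cast ENNReal.toReal_mono ENNReal.one_ne_top h1
  -- expected value of the IPW estimator
  have hEe : ∀ τ, ∫ ω, e τ ω ∂P
      = (g τ)⁻¹ * (E1 τ * p τ) - (1 - g τ)⁻¹ * (E0 τ * (1 - p τ)) := by
    intro τ
    have heq : ∀ ω, e τ ω = (g τ)⁻¹ * (v1 τ ω * I τ ω)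
        - (1 - g τ)⁻¹ * (v0 τ ω * (1 - I τ ω)) := by
      intro ω
      rw [he τ ω]
      by_cases h : m τ ω ≤ b τ
      · rw [if_pos h, if_neg (not_lt.mpr h)]
        simp only [hIdef, if_pos h]
        ring
      · rw [if_neg h, if_pos (not_le.mp h)]
        simp only [hIdef, if_neg h]
        ring
    have hint1 : Integrable (fun ω => v1 τ ω * I τ ω) P :=
      wls_integrable_of_abs_le P ((hm1 τ).mul (hImeas τ)) (C := 1) fun ω => by
        rw [abs_mul]
        exact mul_le_one₀ (abs_le.mpr ⟨by linarith [(hrange τ ω).2.1.1],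
          (hrange τ ω).2.1.2⟩) (abs_nonneg _) (hIabs τ ω)
    have hint0 : Integrable (fun ω => v0 τ ω * (1 - I τ ω)) P :=
      wls_integrable_of_abs_le P ((hm0 τ).mul (measurable_const.sub (hImeas τ)))
        (C := 1) fun ω => by
        rw [abs_mul]
        refine mul_le_one₀ (abs_le.mpr ⟨by linarith [(hrange τ ω).2.2.1],
          (hrange τ ω).2.2.2⟩) (abs_nonneg _) ?_
        simp only [hIdef]
        split_ifs <;> simp
    have hm1' : ∫ ω, v1 τ ω * I τ ω ∂P = E1 τ * p τ := by
      have h := (hIndv1 τ).integral_mul_eq_mul_integral (hIv1 τ).aestronglyMeasurable (hIint τ).aestronglyMeasurable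
      calc ∫ ω, v1 τ ω * I τ ω ∂P = ∫ ω, (v1 τ * I τ) ω ∂P := rfl
        _ = (∫ ω, v1 τ ω ∂P) * ∫ ω, I τ ω ∂P := h
        _ = E1 τ * p τ := by rw [hpI τ]
    have hm0' : ∫ ω, v0 τ ω * (1 - I τ ω) ∂P = E0 τ * (1 - p τ) := by
      have hmul : ∫ ω, v0 τ ω * I τ ω ∂P = E0 τ * p τ := by
        have h := (hIndv0 τ).integral_mul_eq_mul_integral (hIv0 τ).aestronglyMeasurable (hIint τ).aestronglyMeasurable
        calc ∫ ω, v0 τ ω * I τ ω ∂P = ∫ ω, (v0 τ * I τ) ω ∂P := rfl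
          _ = (∫ ω, v0 τ ω ∂P) * ∫ ω, I τ ω ∂P := h
          _ = E0 τ * p τ := by rw [hpI τ]
      have hsplit : ∫ ω, v0 τ ω * (1 - I τ ω) ∂P
          = (∫ ω, v0 τ ω ∂P) - ∫ ω, v0 τ ω * I τ ω ∂P := by
        rw [← integral_sub (hIv0 τ) (wls_integrable_of_abs_le P (f := fun ω => v0 τ ω * I τ ω) ((hm0 τ).mul (hImeas τ))
          (C := 1) fun ω => by
            rw [abs_mul]
            exact mul_le_one₀ (abs_le.mpr ⟨by linarith [(hrange τ ω).2.2.1],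
              (hrange τ ω).2.2.2⟩) (abs_nonneg _) (hIabs τ ω))]
        congr 1
        ext ω
        ring
      rw [hsplit, hmul]
      ring
    calc ∫ ω, e τ ω ∂P
        = ∫ ω, ((g τ)⁻¹ * (v1 τ ω * I τ ω)
            - (1 - g τ)⁻¹ * (v0 τ ω * (1 - I τ ω))) ∂P := by
          exact integral_congr_ae (Filter.Eventually.of_forall heq)
      _ = (g τ)⁻¹ * (E1 τ * p τ) - (1 - g τ)⁻¹ * (E0 τ * (1 - p τ)) := by
          rw [integral_sub (hint1.const_mul _) (hint0.const_mul _),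
            integral_const_mul, integral_const_mul, hm1', hm0']
  -- bias bound
  have hbias : ∀ τ, |(∫ ω, e τ ω ∂P) - θstar ⬝ᵥ x τ| ≤ u τ * σ τ := by
    intro τ
    have hgp := hgpos τ
    have hg1' : 0 < 1 - g τ := by linarith [hg1 τ]
    have hsub : E1 τ - E0 τ = θstar ⬝ᵥ x τ := by
      rw [hE1def, hE0def, ← integral_sub (hIv1 τ) (hIv0 τ)]
      exact hmean τ
    have hδ : (∫ ω, e τ ω ∂P) - θstar ⬝ᵥ x τ
        = (p τ - g τ) * (E1 τ / g τ + E0 τ / (1 - g τ)) := by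
      rw [hEe τ, ← hsub]
      field_simp
      ring
    rw [hδ, abs_mul]
    have h2 : |E1 τ / g τ + E0 τ / (1 - g τ)| ≤ σ τ := by
      have hσval : σ τ = (g τ)⁻¹ + (1 - g τ)⁻¹ := by
        rw [hσ τ]; field_simp; ring
      rw [abs_of_nonneg (add_nonneg (div_nonneg (hE1mem τ).1 hgp.le)
        (div_nonneg (hE0mem τ).1 hg1'.le)), hσval]
      have b1 : E1 τ / g τ ≤ (g τ)⁻¹ := by
        rw [div_le_iff₀ hgp, inv_mul_cancel₀ hgp.ne']
        exact (hE1mem τ).2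
      have b0 : E0 τ / (1 - g τ) ≤ (1 - g τ)⁻¹ := by
        rw [div_le_iff₀ hg1', inv_mul_cancel₀ hg1'.ne']
        exact (hE0mem τ).2
      linarith
    exact mul_le_mul (hprop τ) h2 (abs_nonneg _) (hu τ)
  have hσval : ∀ τ, σ τ = (g τ)⁻¹ + (1 - g τ)⁻¹ := by
    intro τ
    have hgp := hgpos τ
    have hg1' : 0 < 1 - g τ := by linarith [hg1 τ]
    rw [hσ τ]; field_simp; ring
  -- centered weighted variables
  set w : ι → ℝ := fun τ => (σ τ ^ 2)⁻¹ * (x τ ⬝ᵥ y) with hwdef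
  set Ee : ι → ℝ := fun τ => ∫ ω, e τ ω ∂P with hEedef
  set Z : ι → Ω → ℝ := fun τ ω => w τ * e τ ω - w τ * Ee τ with hZdef
  have hZmeas : ∀ τ, Measurable (Z τ) := fun τ =>
    ((hemeas τ).const_mul _).sub measurable_const
  set c : ι → ℝ := fun τ => |w τ| * σ τ with hcdef
  have hcnn : ∀ τ, 0 ≤ c τ := fun τ => mul_nonneg (abs_nonneg _) (hσpos τ).le
  have hEebound : ∀ τ, -(1 - g τ)⁻¹ ≤ Ee τ ∧ Ee τ ≤ (g τ)⁻¹ := by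
    intro τ
    constructor
    · have := integral_mono (integrable_const (-(1 - g τ)⁻¹)) (hIe τ)
        (fun ω => (hebound τ ω).1)
      simpa using this
    · have := integral_mono (hIe τ) (integrable_const ((g τ)⁻¹))
        (fun ω => (hebound τ ω).2)
      simpa using this
  have hZabs : ∀ τ ω, |Z τ ω| ≤ c τ := by
    intro τ ω
    have h1 := hebound τ ω
    have h2 := hEebound τ
    have heZ : Z τ ω = w τ * (e τ ω - Ee τ) := by rw [hZdef]; ring
    rw [heZ, hcdef, abs_mul]
    refine mul_le_mul_of_nonneg_left ?_ (abs_nonneg _)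
    rw [abs_le, hσval τ]
    have hgp := hgpos τ
    have hg1' : 0 < 1 - g τ := by linarith [hg1 τ]
    constructor <;> linarith
  have hZint : ∀ τ, ∫ ω, Z τ ω ∂P = 0 := by
    intro τ
    have : ∫ ω, Z τ ω ∂P = ∫ ω, (w τ * e τ ω - w τ * Ee τ) ∂P := rfl
    rw [this, integral_sub ((hIe τ).const_mul _) (integrable_const _),
      integral_const_mul, integral_const]
    simp [hEedef]
  have hsumc2 : ∑ τ : ι, c τ ^ 2 = V := by
    rw [hVdef]
    refine Finset.sum_congr rfl fun τ _ => ?_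
    have hσne : σ τ ≠ 0 := (hσpos τ).ne'
    rw [hcdef, mul_pow, sq_abs, hwdef]
    field_simp
  -- independence of the centered family
  have hZindep : iIndepFun Z P := by
    set F : ι → ℝ × ℝ × ℝ → ℝ := fun τ q =>
      w τ * ((if q.1 ≤ b τ then q.2.1 / g τ else 0)
        - (if b τ < q.1 then q.2.2 / (1 - g τ) else 0)) - w τ * Ee τ with hF
    have hFmeas : ∀ τ, Measurable (F τ) := by
      intro τ
      apply Measurable.sub _ measurable_const
      apply Measurable.const_mul
      apply Measurable.sub
      · exact Measurable.ite (measurableSet_le measurable_fst measurable_const)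
          ((measurable_fst.comp measurable_snd).div_const _) measurable_const
      · exact Measurable.ite (measurableSet_lt measurable_const measurable_fst)
          ((measurable_snd.comp measurable_snd).div_const _) measurable_const
    have hcomp := hindep.comp F hFmeas
    have hZeq : (fun τ => F τ ∘ (fun ω => (m τ ω, v1 τ ω, v0 τ ω))) = Z := by
      funext τ ω
      simp only [hZdef, hF, Function.comp_apply]
      rw [he τ ω]
    rw [hZeq] at hcomp
    exact hcomp
  -- the centered sum
  set S : Ω → ℝ := ∑ τ : ι, Z τ with hSdef
  have hSapp : ∀ ω, S ω = ∑ τ : ι, Z τ ω := by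
    intro ω
    rw [hSdef]
    exact Finset.sum_apply ω Finset.univ Z
  have hSmeas : Measurable S := by
    have : Measurable fun ω => ∑ τ : ι, Z τ ω :=
      Finset.measurable_sum Finset.univ fun τ _ => hZmeas τ
    have heq : S = fun ω => ∑ τ : ι, Z τ ω := funext hSapp
    rw [heq]
    exact this
  have hSabs : ∀ ω, |S ω| ≤ ∑ τ : ι, c τ := by
    intro ω
    rw [hSapp]
    exact (Finset.abs_sum_le_sum_abs _ _).trans
      (Finset.sum_le_sum fun τ _ => hZabs τ ω)
  have hSexp_int : ∀ t : ℝ, Integrable (fun ω => Real.exp (t * S ω)) P := by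
    intro t
    refine wls_integrable_of_abs_le P ((hSmeas.const_mul t).exp)
      (C := Real.exp (|t| * ∑ τ : ι, c τ)) fun ω => ?_
    rw [abs_of_pos (Real.exp_pos _), Real.exp_le_exp]
    calc t * S ω ≤ |t * S ω| := le_abs_self _
      _ = |t| * |S ω| := abs_mul _ _
      _ ≤ |t| * ∑ τ : ι, c τ := mul_le_mul_of_nonneg_left (hSabs ω) (abs_nonneg t)
  have hVle : V ≤ s2 := by
    rw [hs2split]; linarith [hynn]
  have hmgfS : ∀ t : ℝ, mgf S P t ≤ Real.exp (t ^ 2 * s2 / 2) := by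
    intro t
    rw [hSdef, hZindep.mgf_sum hZmeas]
    calc ∏ τ : ι, mgf (Z τ) P t
        ≤ ∏ τ : ι, Real.exp (t ^ 2 * c τ ^ 2 / 2) :=
          Finset.prod_le_prod (fun τ _ => mgf_nonneg) fun τ _ =>
            wls_mgf_le_exp_half_sq P (hZmeas τ) (hcnn τ) (hZabs τ) (hZint τ) t
      _ = Real.exp (∑ τ : ι, t ^ 2 * c τ ^ 2 / 2) := (Real.exp_sum _ _).symm
      _ ≤ Real.exp (t ^ 2 * s2 / 2) := by
          rw [Real.exp_le_exp]
          have : ∑ τ : ι, t ^ 2 * c τ ^ 2 / 2 = t ^ 2 / 2 * ∑ τ : ι, c τ ^ 2 := by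
            rw [Finset.mul_sum]
            exact Finset.sum_congr rfl fun τ _ => by ring
          rw [this, hsumc2]
          calc t ^ 2 / 2 * V ≤ t ^ 2 / 2 * s2 :=
                mul_le_mul_of_nonneg_left hVle (by positivity)
            _ = t ^ 2 * s2 / 2 := by ring
  -- decomposition of the prediction error
  have hθx : ∀ ω, θhat ω ⬝ᵥ xq = ∑ τ : ι, w τ * e τ ω := by
    intro ω
    rw [hθhat ω, dotProduct_comm, Matrix.dotProduct_mulVec, ← hAinvT,
      Matrix.vecMul_transpose, ← hy, hdotsum]
    refine Finset.sum_congr rfl fun τ _ => ?_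
    rw [hdot_smul]
    simp only [hwdef]
    rw [dotProduct_comm y (x τ)]
    ring
  have hwθ : ∑ τ : ι, w τ * (θstar ⬝ᵥ x τ) = θstar ⬝ᵥ xq - θstar ⬝ᵥ y := by
    have h1 : θstar ⬝ᵥ (A *ᵥ y) = θstar ⬝ᵥ xq := by rw [hAy]
    rw [hAdot θstar y] at h1
    have h2 : ∑ τ : ι, (σ τ ^ 2)⁻¹ * ((θstar ⬝ᵥ x τ) * (x τ ⬝ᵥ y))
        = ∑ τ : ι, w τ * (θstar ⬝ᵥ x τ) :=
      Finset.sum_congr rfl fun τ _ => by rw [hwdef]; ring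
    rw [h2] at h1
    linarith
  set D : ℝ := (∑ τ : ι, w τ * Ee τ) - θstar ⬝ᵥ xq with hDdef
  have herr : ∀ ω, θhat ω ⬝ᵥ xq - θstar ⬝ᵥ xq = S ω + D := by
    intro ω
    rw [hθx ω, hSapp, hDdef]
    have : ∑ τ : ι, Z τ ω = ∑ τ : ι, (w τ * e τ ω - w τ * Ee τ) := rfl
    rw [this, Finset.sum_sub_distrib]
    ring
  set U : ℝ := Real.sqrt (∑ τ : ι, u τ ^ 2) with hUdef
  have hUnn : 0 ≤ U := Real.sqrt_nonneg _
  set s : ℝ := Real.sqrt s2 with hsdef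
  have hsnn : 0 ≤ s := Real.sqrt_nonneg _
  have hss : s ^ 2 = s2 := Real.sq_sqrt hs2nn
  have hyle : |θstar ⬝ᵥ y| ≤ s := by
    have hCS := Finset.sum_mul_sq_le_sq_mul_sq Finset.univ θstar y
    have hθθ : ∑ i, θstar i ^ 2 = θstar ⬝ᵥ θstar :=
      Finset.sum_congr rfl fun i _ => sq (θstar i) ▸ by ring
    have hyy : ∑ i, y i ^ 2 = y ⬝ᵥ y :=
      Finset.sum_congr rfl fun i _ => by ring
    have hdot : θstar ⬝ᵥ y = ∑ i, θstar i * y i := rfl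
    rw [← Real.sqrt_sq_eq_abs, hsdef]
    apply Real.sqrt_le_sqrt
    rw [hdot]
    calc (∑ i, θstar i * y i) ^ 2 ≤ (∑ i, θstar i ^ 2) * ∑ i, y i ^ 2 := hCS
      _ = (θstar ⬝ᵥ θstar) * (y ⬝ᵥ y) := by rw [hθθ, hyy]
      _ ≤ 1 * s2 := by
          refine mul_le_mul hθ ?_ hynn (by norm_num)
          rw [hs2split]; linarith
      _ = s2 := one_mul _
  have hbiasSum : |∑ τ : ι, w τ * (Ee τ - θstar ⬝ᵥ x τ)| ≤ U * s := by
    calc |∑ τ : ι, w τ * (Ee τ - θstar ⬝ᵥ x τ)|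
        ≤ ∑ τ : ι, |w τ * (Ee τ - θstar ⬝ᵥ x τ)| := Finset.abs_sum_le_sum_abs _ _
      _ ≤ ∑ τ : ι, u τ * c τ := by
          refine Finset.sum_le_sum fun τ _ => ?_
          rw [abs_mul]
          calc |w τ| * |Ee τ - θstar ⬝ᵥ x τ| ≤ |w τ| * (u τ * σ τ) :=
                mul_le_mul_of_nonneg_left (hbias τ) (abs_nonneg _)
            _ = u τ * c τ := by rw [hcdef]; ring
      _ ≤ Real.sqrt (∑ τ : ι, u τ ^ 2) * Real.sqrt (∑ τ : ι, c τ ^ 2) :=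
          Real.sum_mul_le_sqrt_mul_sqrt _ _ _
      _ ≤ U * s := by
          rw [hUdef]
          refine mul_le_mul_of_nonneg_left ?_ (Real.sqrt_nonneg _)
          rw [hsumc2, hsdef]
          exact Real.sqrt_le_sqrt hVle
  have hD : |D| ≤ (1 + U) * s := by
    have hDeq : D = (∑ τ : ι, w τ * (Ee τ - θstar ⬝ᵥ x τ)) - θstar ⬝ᵥ y := by
      rw [hDdef]
      have : ∑ τ : ι, w τ * (Ee τ - θstar ⬝ᵥ x τ)
          = (∑ τ : ι, w τ * Ee τ) - ∑ τ : ι, w τ * (θstar ⬝ᵥ x τ) := by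
        rw [← Finset.sum_sub_distrib]
        exact Finset.sum_congr rfl fun τ _ => by ring
      rw [this, hwθ]
      ring
    rw [hDeq]
    calc |(∑ τ : ι, w τ * (Ee τ - θstar ⬝ᵥ x τ)) - θstar ⬝ᵥ y|
        ≤ |∑ τ : ι, w τ * (Ee τ - θstar ⬝ᵥ x τ)| + |θstar ⬝ᵥ y| := abs_sub _ _
      _ ≤ U * s + s := add_le_add hbiasSum hyle
      _ = (1 + U) * s := by ring
  -- numeric setup
  set L : ℝ := Real.log T with hLdef
  have hT2 : (2:ℝ) ≤ (T:ℝ) := by exact_mod_cast hT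
  have hTpos : (0:ℝ) < (T:ℝ) := by linarith only [hT2]
  have hL2 : Real.log 2 ≤ L := by
    rw [hLdef]
    exact Real.log_le_log two_pos hT2
  have hl2 : (0.6931471803 : ℝ) < Real.log 2 := Real.log_two_gt_d9
  have hLpos : (0:ℝ) < L := by linarith only [hl2, hL2]
  rcases eq_or_lt_of_le hs2nn with hs20 | hs2pos
  · -- degenerate case : xq = 0
    have hyy0 : y ⬝ᵥ y = 0 := by
      rw [hs2split] at hs20
      linarith only [hs20, hVnn, hynn]
    have hy0 : y = 0 := dotProduct_self_eq_zero.mp hyy0.symm.symm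
    have hxq0 : xq = 0 := by rw [← hAy, hy0, Matrix.mulVec_zero]
    have hs0 : s = 0 := by rw [hsdef, ← hs20, Real.sqrt_zero]
    have hall : ∀ ω, |θhat ω ⬝ᵥ xq - θstar ⬝ᵥ xq| ≤ γ * s := by
      intro ω
      have h1 : θhat ω ⬝ᵥ xq = 0 := by
        rw [hθx ω]
        refine Finset.sum_eq_zero fun τ _ => ?_
        have : w τ = 0 := by
          rw [hwdef]
          simp only [hy0]
          rw [dotProduct_zero, mul_zero]
        rw [this, zero_mul]
      have h2 : θstar ⬝ᵥ xq = 0 := by rw [hxq0, dotProduct_zero]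
      rw [h1, h2, hs0]
      simp
    have hset : {ω | |θhat ω ⬝ᵥ xq - θstar ⬝ᵥ xq| ≤ γ * s} = Set.univ :=
      Set.eq_univ_iff_forall.mpr hall
    rw [hset]
    simp only [measure_univ, ENNReal.toReal_one]
    have h0 : (0:ℝ) ≤ ((T:ℝ) ^ 3)⁻¹ := by positivity
    linarith only [h0]
  · -- main case
    have hspos : 0 < s := Real.sqrt_pos.mpr hs2pos
    set ε : ℝ := 14 * L * s with hεdef
    have hεpos : 0 < ε := by
      rw [hεdef]
      exact mul_pos (mul_pos (by norm_num) hLpos) hspos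
    set t0 : ℝ := ε / s2 with ht0def
    have ht0nn : 0 ≤ t0 := le_of_lt (div_pos hεpos hs2pos)
    have ht0s : t0 = 14 * L / s := by
      rw [ht0def, hεdef, ← hss]
      field_simp
    have hexpval : -t0 * ε + t0 ^ 2 * s2 / 2 = -(98 * L ^ 2) := by
      rw [ht0s, hεdef, ← hss]
      field_simp
      ring
    have hup : (P {ω | ε ≤ S ω}).toReal ≤ Real.exp (-(98 * L ^ 2)) := by
      calc (P {ω | ε ≤ S ω}).toReal
          ≤ Real.exp (-t0 * ε) * mgf S P t0 :=
            measure_ge_le_exp_mul_mgf ε ht0nn (hSexp_int t0)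
        _ ≤ Real.exp (-t0 * ε) * Real.exp (t0 ^ 2 * s2 / 2) :=
            mul_le_mul_of_nonneg_left (hmgfS t0) (Real.exp_pos _).le
        _ = Real.exp (-t0 * ε + t0 ^ 2 * s2 / 2) := (Real.exp_add _ _).symm
        _ = Real.exp (-(98 * L ^ 2)) := by rw [hexpval]
    have hdown : (P {ω | S ω ≤ -ε}).toReal ≤ Real.exp (-(98 * L ^ 2)) := by
      calc (P {ω | S ω ≤ -ε}).toReal
          ≤ Real.exp (-(-t0) * -ε) * mgf S P (-t0) :=
            measure_le_le_exp_mul_mgf (-ε) (neg_nonpos.mpr ht0nn) (hSexp_int (-t0))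
        _ ≤ Real.exp (-(-t0) * -ε) * Real.exp ((-t0) ^ 2 * s2 / 2) :=
            mul_le_mul_of_nonneg_left (hmgfS (-t0)) (Real.exp_pos _).le
        _ = Real.exp (-(-t0) * -ε + (-t0) ^ 2 * s2 / 2) := (Real.exp_add _ _).symm
        _ = Real.exp (-(98 * L ^ 2)) := by
            rw [show -(-t0) * -ε + (-t0) ^ 2 * s2 / 2 = -t0 * ε + t0 ^ 2 * s2 / 2 from by ring,
              hexpval]
    have hnum : Real.exp (-(98 * L ^ 2)) + Real.exp (-(98 * L ^ 2)) ≤ ((T:ℝ) ^ 3)⁻¹ := by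
      have hT3 : ((T:ℝ) ^ 3)⁻¹ = Real.exp (-(3 * L)) := by
        rw [Real.exp_neg]
        congr 1
        rw [show (3:ℝ) * L = L + (L + L) from by ring, Real.exp_add, Real.exp_add,
          hLdef, Real.exp_log hTpos]
        ring
      rw [hT3, show Real.exp (-(98 * L ^ 2)) + Real.exp (-(98 * L ^ 2))
        = 2 * Real.exp (-(98 * L ^ 2)) from by ring,
        show (2:ℝ) = Real.exp (Real.log 2) from (Real.exp_log two_pos).symm,
        ← Real.exp_add, Real.exp_le_exp]
      nlinarith [mul_le_mul_of_nonneg_right hL2 hLpos.le, Real.log_two_lt_d9, hl2, hL2]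
    have hincl : {ω | |θhat ω ⬝ᵥ xq - θstar ⬝ᵥ xq| ≤ γ * s}ᶜ
        ⊆ {ω | ε ≤ S ω} ∪ {ω | S ω ≤ -ε} := by
      intro ω hω
      simp only [Set.mem_compl_iff, Set.mem_setOf_eq, not_le] at hω
      rw [herr ω] at hω
      by_contra hcon
      simp only [Set.mem_union, Set.mem_setOf_eq, not_or, not_le] at hcon
      obtain ⟨hc1, hc2⟩ := hcon
      have htr : |S ω + D| ≤ |S ω| + |D| := abs_add_le _ _
      have habs : |S ω| < ε := abs_lt.mpr ⟨hc2, hc1⟩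
      have hexp : γ * s = s + 14 * (L * s) + 4 * (U * s) := by
        rw [hγ]
        ring
      have hD' : |D| ≤ s + U * s := by
        calc |D| ≤ (1 + U) * s := hD
          _ = s + U * s := by ring
      have hUs : 0 ≤ U * s := mul_nonneg hUnn hsnn
      have hεval : ε = 14 * (L * s) := by rw [hεdef]; ring
      linarith only [hω, htr, habs, hexp, hD', hUs, hεval]
    have hGmeas : MeasurableSet {ω | |θhat ω ⬝ᵥ xq - θstar ⬝ᵥ xq| ≤ γ * s} := by
      have hset : {ω | |θhat ω ⬝ᵥ xq - θstar ⬝ᵥ xq| ≤ γ * s}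
          = {ω | |S ω + D| ≤ γ * s} := by
        ext ω
        simp only [Set.mem_setOf_eq, herr ω]
      rw [hset]
      exact measurableSet_le ((hSmeas.add_const D).abs) measurable_const
    have hcompl : (P {ω | |θhat ω ⬝ᵥ xq - θstar ⬝ᵥ xq| ≤ γ * s}ᶜ).toReal
        ≤ (P {ω | ε ≤ S ω}).toReal + (P {ω | S ω ≤ -ε}).toReal := by
      calc (P {ω | |θhat ω ⬝ᵥ xq - θstar ⬝ᵥ xq| ≤ γ * s}ᶜ).toReal
          ≤ (P ({ω | ε ≤ S ω} ∪ {ω | S ω ≤ -ε})).toReal :=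
            ENNReal.toReal_mono (measure_ne_top _ _) (measure_mono hincl)
        _ ≤ ((P {ω | ε ≤ S ω}) + (P {ω | S ω ≤ -ε})).toReal :=
            ENNReal.toReal_mono
              (ENNReal.add_ne_top.mpr ⟨measure_ne_top _ _, measure_ne_top _ _⟩)
              (measure_union_le _ _)
        _ = (P {ω | ε ≤ S ω}).toReal + (P {ω | S ω ≤ -ε}).toReal :=
            ENNReal.toReal_add (measure_ne_top _ _) (measure_ne_top _ _)
    have hGone : (P {ω | |θhat ω ⬝ᵥ xq - θstar ⬝ᵥ xq| ≤ γ * s}).toReal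
        = 1 - (P {ω | |θhat ω ⬝ᵥ xq - θstar ⬝ᵥ xq| ≤ γ * s}ᶜ).toReal := by
      have hsum := prob_add_prob_compl (μ := P) hGmeas
      have h2 := congrArg ENNReal.toReal hsum
      rw [ENNReal.toReal_add (measure_ne_top _ _) (measure_ne_top _ _),
        ENNReal.toReal_one] at h2
      linarith only [h2]
    rw [hGone]
    linarith only [hup, hdown, hnum, hcompl]
end

section
/- Let d ≥ 1 and t ≥ 1 be integers and let z_1, …, z_{t−1} ∈ ℝ^d with ‖z_τ‖₂ ≤ 1 for every τ. For 1 ≤ s ≤ t define the Gram matrix A_s = I_d + Σ_{τ<s} z_τ z_τᵀ (which is positive definite, hence invertible). Then Σ_{τ=1}^{t−1} z_τᵀ A_τ^{−1} z_τ ≤ 2d·log(1 + (t−1)/d). -/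
open Matrix Finset

lemma psd_vmv {d : ℕ} (v : Fin d → ℝ) : Matrix.PosSemidef (vecMulVec v v) := by
  rw [vecMulVec_eq Unit]
  simpa using Matrix.posSemidef_conjTranspose_mul_self (Matrix.replicateRow Unit v)

lemma log_ineq {a : ℝ} (h0 : 0 ≤ a) (h1 : a ≤ 1) : a ≤ 2 * Real.log (1 + a) := by
  have hpos : (0:ℝ) < 1 + a := by linarith
  have h2 : Real.log (1/(1+a)) ≤ 1/(1+a) - 1 := Real.log_le_sub_one_of_pos (by positivity)
  rw [one_div, Real.log_inv] at h2
  have h3 : a / (1+a) ≤ Real.log (1+a) := by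
    have h5 : (1+a)⁻¹ - 1 = -(a/(1+a)) := by field_simp; ring
    rw [h5] at h2; linarith
  have hL : 0 ≤ Real.log (1+a) := Real.log_nonneg (by linarith)
  have h3' : a ≤ Real.log (1+a) * (1+a) := (div_le_iff₀ hpos).mp h3
  nlinarith [h3', hL, h1]

lemma key_le {d : ℕ} {B : Matrix (Fin d) (Fin d) ℝ} (hB : B.PosSemidef) (z : Fin d → ℝ) :
    z ⬝ᵥ ((1+B)⁻¹ *ᵥ z) ≤ z ⬝ᵥ z := by
  have hA : (1+B).PosDef := Matrix.PosDef.one.add_posSemidef hB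
  set w := (1+B)⁻¹ *ᵥ z with hw
  have hz : (1+B) *ᵥ w = z := by
    rw [hw, Matrix.mulVec_mulVec, Matrix.mul_nonsing_inv _ hA.det_pos.ne'.isUnit,
      Matrix.one_mulVec]
  have hBw : 0 ≤ w ⬝ᵥ (B *ᵥ w) := by simpa using hB.dotProduct_mulVec_nonneg w
  have hBB : 0 ≤ (B *ᵥ w) ⬝ᵥ (B *ᵥ w) :=
    Finset.sum_nonneg fun i _ => mul_self_nonneg _
  have h1 : z ⬝ᵥ w = w ⬝ᵥ w + w ⬝ᵥ (B *ᵥ w) := by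
    rw [← hz, Matrix.add_mulVec, Matrix.one_mulVec, add_dotProduct, dotProduct_comm (B *ᵥ w) w]
  have h2 : z ⬝ᵥ z = w ⬝ᵥ w + 2 * (w ⬝ᵥ (B *ᵥ w)) + (B *ᵥ w) ⬝ᵥ (B *ᵥ w) := by
    rw [← hz, Matrix.add_mulVec, Matrix.one_mulVec, add_dotProduct, dotProduct_add,
      dotProduct_add, dotProduct_comm (B *ᵥ w) w]
    ring
  linarith

lemma det_step {d : ℕ} (M : Matrix (Fin d) (Fin d) ℝ) (hM : IsUnit M.det) (v : Fin d → ℝ) :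
    (M + vecMulVec v v).det = M.det * (1 + v ⬝ᵥ (M⁻¹ *ᵥ v)) := by
  rw [vecMulVec_eq Unit, Matrix.det_add_replicateCol_mul_replicateRow hM]
  congr 1
  rw [Matrix.mul_assoc, ← Matrix.replicateCol_mulVec, Matrix.det_unique, Matrix.add_apply]
  simp [Matrix.replicateRow_mul_replicateCol_apply]

lemma trace_eq_sum_eig {d : ℕ} {M : Matrix (Fin d) (Fin d) ℝ} (hM : M.IsHermitian) :
    M.trace = ∑ i, hM.eigenvalues i := by
  simpa using hM.trace_eq_sum_eigenvalues

lemma log_det_le {d : ℕ} (hd : 1 ≤ d) {M : Matrix (Fin d) (Fin d) ℝ} (hM : M.PosDef) :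
    Real.log M.det ≤ d * Real.log (M.trace / d) := by
  have hd0 : (0:ℝ) < d := by exact_mod_cast hd
  set μ := hM.1.eigenvalues with hμ
  have hpos : ∀ i, 0 < μ i := hM.eigenvalues_pos
  have hdet : M.det = ∏ i, μ i := by simpa using hM.1.det_eq_prod_eigenvalues
  have htr : M.trace = ∑ i, μ i := trace_eq_sum_eig hM.1
  have hw : ∑ _i : Fin d, (1/(d:ℝ)) = 1 := by
    simp only [Finset.sum_const, card_univ, Fintype.card_fin, nsmul_eq_mul]
    field_simp
  have hgm := Real.geom_mean_le_arith_mean_weighted univ (fun _ => (1/(d:ℝ))) μ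
      (fun i _ => by positivity) hw (fun i _ => (hpos i).le)
  have hrhs : ∑ i, (1/(d:ℝ)) * μ i = M.trace / d := by
    rw [htr, ← Finset.mul_sum]; ring
  have hlhs : ∏ i, μ i ^ (1/(d:ℝ)) = M.det ^ (1/(d:ℝ)) := by
    rw [hdet, ← Real.finset_prod_rpow _ _ (fun i _ => (hpos i).le)]
  rw [hrhs, hlhs] at hgm
  have hdetpos : 0 < M.det := hM.det_pos
  have hrpos : (0:ℝ) < M.det ^ (1/(d:ℝ)) := Real.rpow_pos_of_pos hdetpos _
  have hlog := Real.log_le_log hrpos hgm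
  rw [Real.log_rpow hdetpos] at hlog
  have hdiv : Real.log M.det / d ≤ Real.log (M.trace / d) := by
    rw [div_eq_mul_inv, mul_comm]; simpa [one_div] using hlog
  calc Real.log M.det = d * (Real.log M.det / d) := by field_simp
    _ ≤ d * Real.log (M.trace / d) := mul_le_mul_of_nonneg_left hdiv hd0.le

/-- The elliptical potential lemma (squared form): for vectors `z 1, …, z (t-1)` in `ℝ^d`
with Euclidean norm at most one and sequentially grown regularized Gram matrices
`A s = I + ∑_{τ < s} z τ (z τ)ᵀ`, one has
`∑_{τ=1}^{t-1} (z τ)ᵀ (A τ)⁻¹ (z τ) ≤ 2 d log (1 + (t-1)/d)`. -/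
theorem elliptical_potential_sq (d t : ℕ) (hd : 1 ≤ d) (ht : 1 ≤ t)
    (z : ℕ → Fin d → ℝ) (hz : ∀ τ, 1 ≤ τ → τ < t → z τ ⬝ᵥ z τ ≤ 1)
    (A : ℕ → Matrix (Fin d) (Fin d) ℝ)
    (hA : ∀ s, A s = 1 + ∑ τ ∈ Finset.Ico 1 s, Matrix.vecMulVec (z τ) (z τ)) :
    ∑ τ ∈ Finset.Ico 1 t, z τ ⬝ᵥ ((A τ)⁻¹ *ᵥ z τ)
      ≤ 2 * d * Real.log (1 + (t - 1 : ℝ) / d) := by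
  have hd0 : (0:ℝ) < d := by exact_mod_cast hd
  have hpsdB : ∀ s, Matrix.PosSemidef (∑ τ ∈ Finset.Ico 1 s, vecMulVec (z τ) (z τ)) := by
    intro s
    induction s with
    | zero => simpa using Matrix.PosSemidef.zero
    | succ n ih =>
      rcases le_or_gt 1 n with h | h
      · rw [Finset.sum_Ico_succ_top h]
        exact ih.add (psd_vmv _)
      · interval_cases n <;> simpa using Matrix.PosSemidef.zero
  have hPD : ∀ s, (A s).PosDef := fun s => by
    rw [hA s]; exact Matrix.PosDef.one.add_posSemidef (hpsdB s)
  set x : ℕ → ℝ := fun τ => z τ ⬝ᵥ ((A τ)⁻¹ *ᵥ z τ) with hxdef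
  have hx0 : ∀ τ, 0 ≤ x τ := fun τ => by
    simpa using ((hPD τ).inv).posSemidef.dotProduct_mulVec_nonneg (z τ)
  have hx1 : ∀ τ, 1 ≤ τ → τ < t → x τ ≤ 1 := by
    intro τ h1 h2
    have hk := key_le (hpsdB τ) (z τ)
    rw [← hA τ] at hk
    exact hk.trans (hz τ h1 h2)
  have hdetstep : ∀ τ, 1 ≤ τ → (A (τ+1)).det = (A τ).det * (1 + x τ) := by
    intro τ h1
    have hAsucc : A (τ+1) = A τ + vecMulVec (z τ) (z τ) := by
      rw [hA, hA, Finset.sum_Ico_succ_top h1, add_assoc]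
    rw [hAsucc, det_step _ (hPD τ).det_pos.ne'.isUnit]
  set f : ℕ → ℝ := fun i => Real.log ((A (i+1)).det) with hfdef
  have hpt : ∀ τ ∈ Finset.Ico 1 t, x τ ≤ 2 * (f τ - f (τ - 1)) := by
    intro τ hτ
    obtain ⟨h1, h2⟩ := Finset.mem_Ico.mp hτ
    have hli := log_ineq (hx0 τ) (hx1 τ h1 h2)
    have hτ1 : τ - 1 + 1 = τ := Nat.sub_add_cancel h1
    have hlogdet : Real.log (1 + x τ) = f τ - f (τ - 1) := by
      have h1x : (0:ℝ) < 1 + x τ := by have := hx0 τ; linarith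
      rw [hfdef]
      simp only [hτ1]
      rw [hdetstep τ h1, Real.log_mul (hPD τ).det_pos.ne' h1x.ne']
      ring
    rw [← hlogdet]; exact hli
  have hsum1 : ∑ τ ∈ Finset.Ico 1 t, x τ ≤ ∑ τ ∈ Finset.Ico 1 t, 2 * (f τ - f (τ - 1)) :=
    Finset.sum_le_sum hpt
  have htel : ∑ τ ∈ Finset.Ico 1 t, (f τ - f (τ - 1)) = f (t-1) - f 0 := by
    rw [Finset.sum_Ico_eq_sum_range]
    have : ∀ i, f (1 + i) - f (1 + i - 1) = f (i + 1) - f i := by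
      intro i; congr 2 <;> omega
    simp_rw [this]
    exact Finset.sum_range_sub f (t - 1)
  have hf0 : f 0 = 0 := by
    have hA1 : A 1 = 1 := by rw [hA]; simp
    simp [hfdef, hA1]
  have hft : f (t - 1) = Real.log ((A t).det) := by
    have h : t - 1 + 1 = t := Nat.sub_add_cancel ht
    rw [hfdef]
    simp only [h]
  have hsum2 : ∑ τ ∈ Finset.Ico 1 t, x τ ≤ 2 * Real.log ((A t).det) := by
    calc ∑ τ ∈ Finset.Ico 1 t, x τ ≤ ∑ τ ∈ Finset.Ico 1 t, 2 * (f τ - f (τ - 1)) := hsum1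
      _ = 2 * (f (t-1) - f 0) := by rw [← Finset.mul_sum, htel]
      _ = 2 * Real.log ((A t).det) := by rw [hf0, hft]; ring
  -- trace bound
  have htrace : (A t).trace ≤ d + ((t:ℝ) - 1) := by
    rw [hA t, Matrix.trace_add, Matrix.trace_one, Matrix.trace_sum]
    have htrv : ∀ τ, (vecMulVec (z τ) (z τ)).trace = z τ ⬝ᵥ z τ := by
      intro τ
      simp [Matrix.trace, Matrix.diag, vecMulVec_apply, dotProduct]
    simp_rw [htrv]
    have hb : ∑ τ ∈ Finset.Ico 1 t, z τ ⬝ᵥ z τ ≤ (t - 1 : ℝ) := by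
      have := Finset.sum_le_card_nsmul (Finset.Ico 1 t) (fun τ => z τ ⬝ᵥ z τ) 1
        (fun τ hτ => by
          obtain ⟨h1, h2⟩ := Finset.mem_Ico.mp hτ
          exact hz τ h1 h2)
      rw [Nat.card_Ico, nsmul_eq_mul, mul_one] at this
      calc ∑ τ ∈ Finset.Ico 1 t, z τ ⬝ᵥ z τ ≤ ((t - 1 : ℕ) : ℝ) := this
        _ = (t : ℝ) - 1 := by
          rw [Nat.cast_sub ht]; norm_num
    simp only [Fintype.card_fin]
    linarith
  have htrpos : (0:ℝ) < (A t).trace / d := by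
    have h1 : ((d:ℝ)) ≤ (A t).trace := by
      rw [hA t, Matrix.trace_add, Matrix.trace_one, Matrix.trace_sum]
      have hnn : ∀ τ ∈ Finset.Ico 1 t, (0:ℝ) ≤ (vecMulVec (z τ) (z τ)).trace := by
        intro τ _
        simp only [Matrix.trace, Matrix.diag, vecMulVec_apply]
        exact Finset.sum_nonneg fun i _ => mul_self_nonneg _
      have := Finset.sum_nonneg hnn
      simp only [Fintype.card_fin]
      linarith
    exact div_pos (lt_of_lt_of_le hd0 h1) hd0
  have hld := log_det_le hd (hPD t)
  have hlogmono : Real.log ((A t).trace / d) ≤ Real.log (1 + ((t:ℝ) - 1) / d) := by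
    apply Real.log_le_log htrpos
    rw [div_le_iff₀ hd0, add_mul, one_mul, div_mul_cancel₀ _ hd0.ne']
    linarith
  calc ∑ τ ∈ Finset.Ico 1 t, x τ ≤ 2 * Real.log ((A t).det) := hsum2
    _ ≤ 2 * (d * Real.log ((A t).trace / d)) := by linarith
    _ ≤ 2 * (d * Real.log (1 + ((t:ℝ) - 1) / d)) := by
        have := mul_le_mul_of_nonneg_left hlogmono hd0.le
        linarith
    _ = 2 * d * Real.log (1 + ((t:ℝ) - 1) / d) := by ring
end

section
/- Let d ≥ 1 and t ≥ 1 be integers and let z_1, …, z_{t−1} ∈ ℝ^d with ‖z_τ‖₂ ≤ 1 for every τ. For 1 ≤ s ≤ t define the Gram matrix A_s = I_d + Σ_{τ<s} z_τ z_τᵀ (which is positive definite, hence invertible). Then Σ_{τ=1}^{t−1} √(z_τᵀ A_τ^{−1} z_τ) ≤ √(2d·(t−1)·log(1 + (t−1)/d)). -/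
open Matrix Finset

section Aux

variable {d : ℕ}

lemma aux_psd_vecMulVec (v : Fin d → ℝ) : (Matrix.vecMulVec v v).PosSemidef := by
  refine Matrix.PosSemidef.of_dotProduct_mulVec_nonneg ?_ ?_
  · ext i j
    simp [Matrix.vecMulVec_apply, Matrix.conjTranspose_apply, mul_comm]
  · intro x
    have h : star x ⬝ᵥ (Matrix.vecMulVec v v *ᵥ x) = (v ⬝ᵥ x) * (v ⬝ᵥ x) := by
      simp only [dotProduct, Matrix.mulVec, Matrix.vecMulVec_apply, Pi.star_apply,
        star_trivial, Finset.mul_sum, Finset.sum_mul]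
      rw [Finset.sum_comm]
      congr 1; ext i; congr 1; ext j; ring
    rw [h]
    exact mul_self_nonneg _

lemma aux_det_one_add (M : Matrix (Fin d) (Fin d) ℝ) (u v : Fin d → ℝ) :
    (1 + Matrix.replicateRow Unit v * M * Matrix.replicateCol Unit u).det = 1 + v ⬝ᵥ (M *ᵥ u) := by
  rw [Matrix.det_unique]
  simp only [Matrix.add_apply, Matrix.one_apply_eq, Matrix.mul_apply, Matrix.replicateRow_apply,
    Matrix.replicateCol_apply, dotProduct, Matrix.mulVec, dotProduct]
  congr 1
  simp_rw [Finset.sum_mul, Finset.mul_sum]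
  rw [Finset.sum_comm]
  simp_rw [mul_assoc]

lemma aux_psd_sum (z : ℕ → Fin d → ℝ) (s : Finset ℕ) :
    (∑ τ ∈ s, Matrix.vecMulVec (z τ) (z τ)).PosSemidef := by
  classical
  induction s using Finset.induction_on with
  | empty => simpa using Matrix.PosSemidef.zero
  | insert _ _ h ih =>
    rw [Finset.sum_insert h]
    exact (aux_psd_vecMulVec _).add ih

end Aux

/-- The elliptical potential lemma (unsquared form): for vectors `z 1, …, z (t-1)` in `ℝ^d`
with Euclidean norm at most one and sequentially grown regularized Gram matrices
`A s = I + ∑_{τ < s} z τ (z τ)ᵀ`, one has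
`∑_{τ=1}^{t-1} √((z τ)ᵀ (A τ)⁻¹ (z τ)) ≤ √(2 d (t-1) log (1 + (t-1)/d))`. -/
theorem elliptical_potential (d t : ℕ) (hd : 1 ≤ d) (ht : 1 ≤ t)
    (z : ℕ → Fin d → ℝ) (hz : ∀ τ, 1 ≤ τ → τ < t → z τ ⬝ᵥ z τ ≤ 1)
    (A : ℕ → Matrix (Fin d) (Fin d) ℝ)
    (hA : ∀ s, A s = 1 + ∑ τ ∈ Finset.Ico 1 s, Matrix.vecMulVec (z τ) (z τ)) :
    ∑ τ ∈ Finset.Ico 1 t, Real.sqrt (z τ ⬝ᵥ ((A τ)⁻¹ *ᵥ z τ))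
      ≤ Real.sqrt (2 * d * (t - 1 : ℝ) * Real.log (1 + (t - 1 : ℝ) / d)) := by
  classical
  -- positive definiteness
  have hApos : ∀ s, (A s).PosDef := by
    intro s
    rw [hA s]
    exact Matrix.PosDef.one.add_posSemidef (aux_psd_sum z _)
  set x : ℕ → ℝ := fun τ => z τ ⬝ᵥ ((A τ)⁻¹ *ᵥ z τ) with hx
  have hxnonneg : ∀ τ, 0 ≤ x τ := by
    intro τ
    have := ((hApos τ).inv.posSemidef).dotProduct_mulVec_nonneg (z τ)
    simpa using this
  have hdet_pos : ∀ s, 0 < (A s).det := fun s => (hApos s).det_pos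
  -- `x τ ≤ 1` for τ in range
  have hxle : ∀ τ, 1 ≤ τ → τ < t → x τ ≤ 1 := by
    intro τ h1 h2
    set w : Fin d → ℝ := (A τ)⁻¹ *ᵥ z τ with hw
    have hAw : A τ *ᵥ w = z τ := by
      rw [hw, Matrix.mulVec_mulVec, Matrix.mul_nonsing_inv _ (isUnit_iff_ne_zero.mpr (hdet_pos τ).ne'),
        Matrix.one_mulVec]
    have hww : w ⬝ᵥ w ≤ x τ := by
      have : x τ = w ⬝ᵥ (A τ *ᵥ w) := by
        rw [hAw, hx]; exact dotProduct_comm _ _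
      rw [this, hA τ, Matrix.add_mulVec, dotProduct_add, Matrix.one_mulVec]
      have h0 := (aux_psd_sum z (Finset.Ico 1 τ)).dotProduct_mulVec_nonneg w
      simp only [star_trivial] at h0
      linarith
    have hcs : x τ ^ 2 ≤ (z τ ⬝ᵥ z τ) * (w ⬝ᵥ w) := by
      have := Finset.sum_mul_sq_le_sq_mul_sq Finset.univ (z τ) w
      simpa [hx, dotProduct, hw, sq] using this
    have hzz : 0 ≤ z τ ⬝ᵥ z τ :=
      Finset.sum_nonneg fun i _ => mul_self_nonneg (z τ i)
    nlinarith [hz τ h1 h2, hxnonneg τ]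
  -- determinant recurrence
  have hdet : ∀ s, 1 ≤ s → (A (s + 1)).det = (A s).det * (1 + x s) := by
    intro s h1
    have hstep : A (s + 1) = A s + Matrix.vecMulVec (z s) (z s) := by
      rw [hA (s + 1), hA s, Finset.sum_Ico_succ_top h1, add_assoc]
    have hcr : Matrix.vecMulVec (z s) (z s) =
        Matrix.replicateCol Unit (z s) * Matrix.replicateRow Unit (z s) := Matrix.vecMulVec_eq Unit _ _
    rw [hstep, hcr, Matrix.det_add_replicateCol_mul_replicateRow (isUnit_iff_ne_zero.mpr (hdet_pos s).ne'),
      aux_det_one_add]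
  -- telescoping sum of logs
  have hlog : ∀ m, 1 ≤ m →
      ∑ τ ∈ Finset.Ico 1 m, Real.log (1 + x τ) = Real.log (A m).det := by
    intro m h1
    induction m with
    | zero => omega
    | succ k ih =>
      rcases Nat.lt_or_ge 1 (k + 1) with hk | hk
      · have hk1 : 1 ≤ k := by omega
        rw [Finset.sum_Ico_succ_top hk1, ih hk1, hdet k hk1,
          Real.log_mul (ne_of_gt (hdet_pos k)) (by nlinarith [hxnonneg k])]
      · have : k + 1 = 1 := by omega
        rw [this]
        simp [hA 1]
  -- x τ ≤ 2 log (1 + x τ)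
  have hxlog : ∀ τ, 1 ≤ τ → τ < t → x τ ≤ 2 * Real.log (1 + x τ) := by
    intro τ h1 h2
    have hx0 := hxnonneg τ
    have hx1 := hxle τ h1 h2
    have hpos : (0:ℝ) < 1 + x τ := by linarith
    have h := Real.log_le_sub_one_of_pos (show (0:ℝ) < (1 + x τ)⁻¹ from inv_pos.mpr hpos)
    rw [Real.log_inv] at h
    have hlow : 1 - (1 + x τ)⁻¹ ≤ Real.log (1 + x τ) := by linarith
    have heq : (1:ℝ) - (1 + x τ)⁻¹ = x τ / (1 + x τ) := by field_simp; ring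
    have key : x τ / 2 ≤ x τ / (1 + x τ) := by
      rw [div_le_div_iff₀ (by norm_num) hpos]
      nlinarith
    rw [heq] at hlow
    linarith
  -- trace bound
  have hdR : (0:ℝ) < d := by exact_mod_cast hd
  have htR : (1:ℝ) ≤ t := by exact_mod_cast ht
  set c : ℝ := 1 + (t - 1 : ℝ) / d with hc
  have hc1 : (1:ℝ) ≤ c := by
    have h0 : (0:ℝ) ≤ (t - 1 : ℝ) / d := div_nonneg (by linarith) hdR.le
    rw [hc]; linarith
  have hcpos : (0:ℝ) < c := by linarith
  have hdc : (d:ℝ) * c = d + (t - 1 : ℝ) := by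
    rw [hc]
    field_simp
  have htrace : (A t).trace ≤ (d:ℝ) * c := by
    rw [hA t, Matrix.trace_add, Matrix.trace_one, Matrix.trace_sum, hdc]
    have h1 : ∀ τ ∈ Finset.Ico 1 t, (Matrix.vecMulVec (z τ) (z τ)).trace ≤ 1 := by
      intro τ hτ
      rw [Finset.mem_Ico] at hτ
      have : (Matrix.vecMulVec (z τ) (z τ)).trace = z τ ⬝ᵥ z τ := by
        simp [Matrix.trace, Matrix.diag, Matrix.vecMulVec_apply, dotProduct]
      rw [this]
      exact hz τ hτ.1 hτ.2
    have h2 : ∑ τ ∈ Finset.Ico 1 t, (Matrix.vecMulVec (z τ) (z τ)).trace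
        ≤ ∑ τ ∈ Finset.Ico 1 t, (1:ℝ) := Finset.sum_le_sum h1
    rw [Finset.sum_const, Nat.card_Ico] at h2
    have : ((t - 1 : ℕ) : ℝ) = (t : ℝ) - 1 := by
      have := Nat.cast_sub ht (R := ℝ)
      simpa using this
    simp only [nsmul_eq_mul, mul_one] at h2
    rw [this] at h2
    simp only [Fintype.card_fin]
    linarith
  -- eigenvalue bound on log det
  have hlogdet : Real.log (A t).det ≤ (d:ℝ) * Real.log c := by
    have hH := (hApos t).1
    have heigpos : ∀ i, 0 < hH.eigenvalues i := (hApos t).eigenvalues_pos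
    have hdet_eq : (A t).det = ∏ i, hH.eigenvalues i := by
      have := hH.det_eq_prod_eigenvalues
      simpa using this
    have htr_eq : (A t).trace = ∑ i, hH.eigenvalues i := by
      simpa using hH.trace_eq_sum_eigenvalues
    have hsum : Real.log (A t).det = ∑ i, Real.log (hH.eigenvalues i) := by
      rw [hdet_eq]
      exact Real.log_prod fun i _ => (heigpos i).ne'
    have hbound : ∀ i, Real.log (hH.eigenvalues i)
        ≤ Real.log c + (hH.eigenvalues i / c - 1) := by
      intro i
      have h := Real.log_le_sub_one_of_pos (div_pos (heigpos i) hcpos)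
      rw [Real.log_div (heigpos i).ne' hcpos.ne'] at h
      linarith
    have hsumle : ∑ i, Real.log (hH.eigenvalues i)
        ≤ ∑ i : Fin d, (Real.log c + (hH.eigenvalues i / c - 1)) :=
      Finset.sum_le_sum fun i _ => hbound i
    have hsum2 : ∑ i : Fin d, (Real.log c + (hH.eigenvalues i / c - 1))
        = (d:ℝ) * Real.log c + ((A t).trace / c - d) := by
      rw [htr_eq]
      rw [Finset.sum_add_distrib, Finset.sum_const, Finset.sum_sub_distrib,
        Finset.sum_const, ← Finset.sum_div]
      simp [Fintype.card_fin, nsmul_eq_mul]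
      try ring
    have htrc : (A t).trace / c - (d:ℝ) ≤ 0 := by
      rw [sub_nonpos, div_le_iff₀ hcpos]
      linarith [htrace]
    rw [hsum]
    calc ∑ i, Real.log (hH.eigenvalues i)
        ≤ (d:ℝ) * Real.log c + ((A t).trace / c - d) := by rw [← hsum2]; exact hsumle
      _ ≤ (d:ℝ) * Real.log c := by linarith
  -- squared sum bound
  have hsumx : ∑ τ ∈ Finset.Ico 1 t, x τ ≤ 2 * (d:ℝ) * Real.log c := by
    have h1 : ∑ τ ∈ Finset.Ico 1 t, x τ
        ≤ ∑ τ ∈ Finset.Ico 1 t, 2 * Real.log (1 + x τ) := by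
      apply Finset.sum_le_sum
      intro τ hτ
      rw [Finset.mem_Ico] at hτ
      exact hxlog τ hτ.1 hτ.2
    rw [← Finset.mul_sum, hlog t ht] at h1
    calc ∑ τ ∈ Finset.Ico 1 t, x τ ≤ 2 * Real.log (A t).det := h1
      _ ≤ 2 * ((d:ℝ) * Real.log c) := by linarith [hlogdet]
      _ = 2 * (d:ℝ) * Real.log c := by ring
  -- Cauchy–Schwarz and conclusion
  have hcard : ((Finset.Ico 1 t).card : ℝ) = (t : ℝ) - 1 := by
    rw [Nat.card_Ico]
    have := Nat.cast_sub ht (R := ℝ)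
    simpa using this
  set L : ℝ := ∑ τ ∈ Finset.Ico 1 t, Real.sqrt (x τ) with hL
  have hLnonneg : 0 ≤ L :=
    Finset.sum_nonneg fun τ _ => Real.sqrt_nonneg _
  have hCS : L ^ 2 ≤ ((t:ℝ) - 1) * ∑ τ ∈ Finset.Ico 1 t, x τ := by
    have h := Finset.sum_mul_sq_le_sq_mul_sq (Finset.Ico 1 t)
      (fun _ => (1:ℝ)) (fun τ => Real.sqrt (x τ))
    simp only [one_mul, one_pow, Finset.sum_const, nsmul_eq_mul, mul_one] at h
    have hsq : ∀ τ ∈ Finset.Ico 1 t, Real.sqrt (x τ) ^ 2 = x τ := fun τ _ =>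
      Real.sq_sqrt (hxnonneg τ)
    rw [Finset.sum_congr rfl hsq] at h
    rw [← hcard]
    exact h
  have hlogc : 0 ≤ Real.log c := Real.log_nonneg hc1
  have hfinal : L ^ 2 ≤ 2 * (d:ℝ) * ((t:ℝ) - 1) * Real.log c := by
    calc L ^ 2 ≤ ((t:ℝ) - 1) * ∑ τ ∈ Finset.Ico 1 t, x τ := hCS
      _ ≤ ((t:ℝ) - 1) * (2 * (d:ℝ) * Real.log c) :=
        mul_le_mul_of_nonneg_left hsumx (by linarith)
      _ = 2 * (d:ℝ) * ((t:ℝ) - 1) * Real.log c := by ring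
  have : L ≤ Real.sqrt (2 * (d:ℝ) * ((t:ℝ) - 1) * Real.log c) :=
    Real.le_sqrt_of_sq_le hfinal
  exact this
end

section
/- Let G : [0,1] → [0,1] be nondecreasing and v ∈ [0,1], and define the SPA expected payoff r(b) = G(b)·(v − b) + ∫₀ᵇ G(m) dm for b ∈ [0,1]. Then for every b ∈ [0,1], r(b) ≤ r(v); moreover r(v) − r(b) = ∫_b^v (G(m) − G(b)) dm when b ≤ v, and r(v) − r(b) = ∫_v^b (G(b) − G(m)) dm when b ≥ v. -/
open intervalIntegral

/-- Truthfulness of second-price auctions: for a nondecreasing `G : [0,1] → [0,1]` and value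
`v ∈ [0,1]`, the expected payoff `r b = G b (v − b) + ∫₀ᵇ G` is maximized at `b = v`, with an
exact expression for the suboptimality gap on each side of `v`. -/
theorem spa_truthful (G : ℝ → ℝ) (hmono : MonotoneOn G (Set.Icc 0 1))
    (hrange : ∀ m ∈ Set.Icc (0:ℝ) 1, G m ∈ Set.Icc (0:ℝ) 1)
    (v : ℝ) (hv : v ∈ Set.Icc (0:ℝ) 1)
    (r : ℝ → ℝ) (hr : ∀ b, r b = G b * (v - b) + ∫ m in (0:ℝ)..b, G m) :
    ∀ b ∈ Set.Icc (0:ℝ) 1,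
      r b ≤ r v ∧
      (b ≤ v → r v - r b = ∫ m in b..v, (G m - G b)) ∧
      (v ≤ b → r v - r b = ∫ m in v..b, (G b - G m)) := by
  intro b hb
  have hInt : ∀ x y : ℝ, x ∈ Set.Icc (0:ℝ) 1 → y ∈ Set.Icc (0:ℝ) 1 →
      IntervalIntegrable G MeasureTheory.volume x y := by
    intro x y hx hy
    exact (hmono.mono (Set.uIcc_subset_Icc hx hy)).intervalIntegrable
  have hsub : Set.uIcc b v ⊆ Set.Icc (0:ℝ) 1 := Set.uIcc_subset_Icc hb hv
  have hIbv : IntervalIntegrable G MeasureTheory.volume b v := hInt b v hb hv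
  have hIc : IntervalIntegrable (fun _ : ℝ => G b) MeasureTheory.volume b v :=
    intervalIntegrable_const
  have key : r v - r b = ∫ m in b..v, (G m - G b) := by
    rw [hr, hr, integral_sub hIbv hIc, integral_const]
    have : (∫ m in (0:ℝ)..v, G m) - ∫ m in (0:ℝ)..b, G m = ∫ m in b..v, G m := by
      rw [integral_interval_sub_left (hInt 0 v (Set.left_mem_Icc.2 one_pos.le) hv)
        (hInt 0 b (Set.left_mem_Icc.2 one_pos.le) hb)]
    rw [smul_eq_mul]
    ring_nf
    nlinarith [this]
  have key2 : v ≤ b → r v - r b = ∫ m in v..b, (G b - G m) := by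
    intro hvb
    rw [key, integral_symm, ← integral_neg]
    simp
  refine ⟨?_, fun _ => key, key2⟩
  rcases le_total b v with h | h
  · have : 0 ≤ ∫ m in b..v, (G m - G b) := by
      apply integral_nonneg h
      intro m hm
      have hmIcc : m ∈ Set.Icc (0:ℝ) 1 := hsub (by simpa [Set.uIcc_of_le h] using hm)
      have := hmono hb hmIcc hm.1
      linarith
    linarith [key]
  · have : 0 ≤ ∫ m in v..b, (G b - G m) := by
      apply integral_nonneg h
      intro m hm
      have hmIcc : m ∈ Set.Icc (0:ℝ) 1 := (Set.uIcc_subset_Icc hv hb) (by simpa [Set.uIcc_of_le h] using hm)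
      have := hmono hmIcc hb hm.2
      linarith
    linarith [key2 h]
end

section
/- Let G : [0,1] → [0,1] be nondecreasing and v ∈ [0,1], and define the SPA expected payoff r(b) = G(b)·(v − b) + ∫₀ᵇ G(m) dm for b ∈ [0,1]. Then for every b ∈ [0,1], r(v) − r(b) ≤ |v − b|. -/
open intervalIntegral

/-- Discretization bound for the second-price auction payoff: for a nondecreasing
`G : [0,1] → [0,1]`, value `v ∈ [0,1]`, and `r b = G b (v − b) + ∫₀ᵇ G`, the suboptimality of
any bid `b ∈ [0,1]` is at most `|v − b|`. -/
theorem spa_payoff_gap_le_dist (G : ℝ → ℝ) (hmono : MonotoneOn G (Set.Icc 0 1))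
    (hrange : ∀ m ∈ Set.Icc (0:ℝ) 1, G m ∈ Set.Icc (0:ℝ) 1)
    (v : ℝ) (hv : v ∈ Set.Icc (0:ℝ) 1)
    (r : ℝ → ℝ) (hr : ∀ b, r b = G b * (v - b) + ∫ m in (0:ℝ)..b, G m) :
    ∀ b ∈ Set.Icc (0:ℝ) 1, r v - r b ≤ |v - b| := by
  intro b hb
  have hint : ∀ x y : ℝ, x ∈ Set.Icc (0:ℝ) 1 → y ∈ Set.Icc (0:ℝ) 1 →
      IntervalIntegrable G MeasureTheory.volume x y := by
    intro x y hx hy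
    exact (hmono.mono (Set.uIcc_subset_Icc hx hy)).intervalIntegrable
  have h0 : (0:ℝ) ∈ Set.Icc (0:ℝ) 1 := by norm_num
  have key : r v - r b = (∫ m in b..v, G m) - G b * (v - b) := by
    rw [hr, hr]
    have := intervalIntegral.integral_add_adjacent_intervals
      (hint 0 b h0 hb) (hint b v hb hv)
    have hvv : v - v = 0 := by ring
    rw [hvv]
    ring_nf
    linarith [this]
  rw [key]
  rcases le_total b v with hbv | hvb
  · rw [abs_of_nonneg (by linarith)]
    have h1 : (∫ m in b..v, G m) ≤ ∫ m in b..v, (1:ℝ) := by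
      apply intervalIntegral.integral_mono_on hbv (hint b v hb hv)
        intervalIntegrable_const
      intro x hx
      exact (hrange x ⟨le_trans hb.1 hx.1, le_trans hx.2 hv.2⟩).2
    rw [intervalIntegral.integral_const, smul_eq_mul, mul_one] at h1
    have h2 : 0 ≤ G b * (v - b) :=
      mul_nonneg (hrange b hb).1 (by linarith)
    linarith
  · rw [abs_of_nonpos (by linarith)]
    have h1 : (∫ m in b..v, G m) ≤ 0 := by
      rw [intervalIntegral.integral_symm]
      have : 0 ≤ ∫ m in v..b, G m := by
        apply intervalIntegral.integral_nonneg hvb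
        intro x hx
        exact (hrange x ⟨le_trans hv.1 hx.1, le_trans hx.2 hb.2⟩).1
      linarith
    have h2 : G b * (v - b) ≥ 1 * (v - b) := by
      have := (hrange b hb).2
      nlinarith
    linarith
end

section
/- Let T ≥ 1 be an integer and let b^i = (i−1)/√T for i = 1, …, j, where j ≥ 1 satisfies b^j ≤ 1. Let G : [0,1] → [0,1] be nondecreasing and let ĝ_1, …, ĝ_j ∈ [0,1]. Let v, v̂ ∈ ℝ and u, E ≥ 0 satisfy |v − b^j| ≤ 1, |v − v̂| ≤ E, |G(b^j) − ĝ_j| ≤ u, and (1/√T)·|Σ_{i≤j} (G(b^i) − ĝ_i)| ≤ u. Define r̄₀(b) = G(b)·(v − b) + ∫₀ᵇ G(m) dm, r̂₀ = ĝ_j·(v̂ − b^j) + (1/√T)·Σ_{i≤j} ĝ_i, r̄₁(b) = r̄₀(b) − v, and r̂₁ = r̂₀ − v̂. Then |r̄₀(b^j) − r̂₀| ≤ ĝ_j·E + 4u + 2/√T and |r̄₁(b^j) − r̂₁| ≤ (1 − ĝ_j)·E + 4u + 2/√T. -/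
open intervalIntegral Finset Real

lemma riemann_bounds (s : ℝ) (hs : 1 ≤ s) (G : ℝ → ℝ)
    (hmono : MonotoneOn G (Set.Icc 0 1))
    (hrange : ∀ m ∈ Set.Icc (0:ℝ) 1, G m ∈ Set.Icc (0:ℝ) 1)
    (b : ℕ → ℝ) (hb : ∀ i, b i = ((i:ℝ) - 1) / s) :
    ∀ k : ℕ, b (k+1) ≤ 1 →
      (1/s) * ∑ i ∈ Finset.Icc 1 k, G (b i) ≤ (∫ m in (0:ℝ)..(b (k+1)), G m) ∧
      (∫ m in (0:ℝ)..(b (k+1)), G m) ≤ (1/s) * ∑ i ∈ Finset.Icc 1 (k+1), G (b i) := by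
  have hs0 : 0 < s := lt_of_lt_of_le one_pos hs
  have hbn : ∀ k : ℕ, b (k+1) = (k:ℝ)/s := by
    intro k; rw [hb]; push_cast; ring
  have hb1 : b 1 = 0 := by rw [hbn]; simp
  have hnonneg : ∀ k : ℕ, 0 ≤ b (k+1) := by
    intro k; rw [hbn]; positivity
  have hstep : ∀ k : ℕ, b (k+1) ≤ b (k+2) := by
    intro k; rw [hbn, hbn]; gcongr
    push_cast; linarith
  have h0mem : (0:ℝ) ∈ Set.Icc (0:ℝ) 1 := by constructor <;> norm_num
  intro k
  induction k with
  | zero =>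
    intro _
    constructor
    · simp [hb1]
    · have hG0 := (hrange 0 h0mem).1
      rw [hb1]
      simp only [intervalIntegral.integral_same, Finset.Icc_self, Finset.sum_singleton, hb1]
      positivity
  | succ k ih =>
    intro hk2
    have hbk1 : b (k+1) ≤ 1 := (hstep k).trans hk2
    have ih' := ih hbk1
    have hsub1 : Set.uIcc (0:ℝ) (b (k+1)) ⊆ Set.Icc 0 1 := by
      rw [Set.uIcc_of_le (hnonneg k)]
      exact Set.Icc_subset_Icc le_rfl hbk1
    have hsub2 : Set.uIcc (b (k+1)) (b (k+2)) ⊆ Set.Icc 0 1 := by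
      rw [Set.uIcc_of_le (hstep k)]
      exact Set.Icc_subset_Icc (hnonneg k) hk2
    have int1 : IntervalIntegrable G MeasureTheory.volume 0 (b (k+1)) :=
      (hmono.mono hsub1).intervalIntegrable
    have int2 : IntervalIntegrable G MeasureTheory.volume (b (k+1)) (b (k+2)) :=
      (hmono.mono hsub2).intervalIntegrable
    have hsplit := intervalIntegral.integral_add_adjacent_intervals int1 int2
    have hmemL : b (k+1) ∈ Set.Icc (0:ℝ) 1 := ⟨hnonneg k, hbk1⟩
    have hmemR : b (k+2) ∈ Set.Icc (0:ℝ) 1 := ⟨hnonneg (k+1), hk2⟩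
    have hdiff : b (k+2) - b (k+1) = 1/s := by
      rw [hbn, hbn]; push_cast; field_simp; ring
    have hlow : G (b (k+1)) * (1/s) ≤ ∫ m in (b (k+1))..(b (k+2)), G m := by
      have hmono' : ∀ x ∈ Set.Icc (b (k+1)) (b (k+2)),
          G (b (k+1)) ≤ G x := fun x hx =>
        hmono hmemL ⟨(hnonneg k).trans hx.1, hx.2.trans hk2⟩ hx.1
      have := intervalIntegral.integral_mono_on (hstep k)
        intervalIntegrable_const int2 hmono'
      rwa [intervalIntegral.integral_const, hdiff, smul_eq_mul, mul_comm] at this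
    have hup : (∫ m in (b (k+1))..(b (k+2)), G m) ≤ G (b (k+2)) * (1/s) := by
      have hmono' : ∀ x ∈ Set.Icc (b (k+1)) (b (k+2)),
          G x ≤ G (b (k+2)) := fun x hx =>
        hmono ⟨(hnonneg k).trans hx.1, hx.2.trans hk2⟩ hmemR hx.2
      have := intervalIntegral.integral_mono_on (hstep k)
        int2 intervalIntegrable_const hmono'
      rwa [intervalIntegral.integral_const, hdiff, smul_eq_mul, mul_comm] at this
    constructor
    · rw [Finset.sum_Icc_succ_top (by omega : 1 ≤ k+1)]
      calc (1/s) * (∑ i ∈ Finset.Icc 1 k, G (b i) + G (b (k+1)))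
          = (1/s) * ∑ i ∈ Finset.Icc 1 k, G (b i) + G (b (k+1)) * (1/s) := by ring
        _ ≤ (∫ m in (0:ℝ)..(b (k+1)), G m) + ∫ m in (b (k+1))..(b (k+2)), G m :=
            add_le_add ih'.1 hlow
        _ = ∫ m in (0:ℝ)..(b (k+2)), G m := hsplit
    · rw [Finset.sum_Icc_succ_top (by omega : 1 ≤ k+2)]
      calc (∫ m in (0:ℝ)..(b (k+2)), G m)
          = (∫ m in (0:ℝ)..(b (k+1)), G m) + ∫ m in (b (k+1))..(b (k+2)), G m := hsplit.symm
        _ ≤ (1/s) * ∑ i ∈ Finset.Icc 1 (k+1), G (b i) + G (b (k+2)) * (1/s) :=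
            add_le_add ih'.2 hup
        _ = (1/s) * (∑ i ∈ Finset.Icc 1 (k+1), G (b i) + G (b (k+2))) := by ring

/-- Validity of the two confidence widths in the better-of-two-UCBs step: with discretized
bids `b i = (i−1)/√T`, CDF estimates `ghat i` of the highest-other-bid CDF `G` at the grid
points, and value estimate `vhat` of `v`, the plug-in reward estimators `rhat0` and `rhat1`
for the two equivalent reward formulations `rbar0` and `rbar1` satisfy
`|rbar0(bʲ) − rhat0| ≤ ghat j · E + 4u + 2/√T` and
`|rbar1(bʲ) − rhat1| ≤ (1 − ghat j) · E + 4u + 2/√T`. -/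
theorem reward_estimate_widths (T : ℕ) (hT : 1 ≤ T)
    (b : ℕ → ℝ) (hb : ∀ i, b i = ((i:ℝ) - 1) / Real.sqrt T)
    (j : ℕ) (hj : 1 ≤ j) (hbj : b j ≤ 1)
    (G : ℝ → ℝ) (hmono : MonotoneOn G (Set.Icc 0 1))
    (hrange : ∀ m ∈ Set.Icc (0:ℝ) 1, G m ∈ Set.Icc (0:ℝ) 1)
    (ghat : ℕ → ℝ) (hghat : ∀ i, 1 ≤ i → i ≤ j → ghat i ∈ Set.Icc (0:ℝ) 1)
    (v vhat : ℝ) (u E : ℝ) (hu : 0 ≤ u) (hE : 0 ≤ E)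
    (hvb : |v - b j| ≤ 1) (hvvhat : |v - vhat| ≤ E)
    (hGj : |G (b j) - ghat j| ≤ u)
    (hGsum : (1 / Real.sqrt T) * |∑ i ∈ Finset.Icc 1 j, (G (b i) - ghat i)| ≤ u)
    (rbar0 rbar1 : ℝ → ℝ) (rhat0 rhat1 : ℝ)
    (hrbar0 : ∀ x, rbar0 x = G x * (v - x) + ∫ m in (0:ℝ)..x, G m)
    (hrhat0 : rhat0 = ghat j * (vhat - b j)
        + (1 / Real.sqrt T) * ∑ i ∈ Finset.Icc 1 j, ghat i)
    (hrbar1 : ∀ x, rbar1 x = rbar0 x - v) (hrhat1 : rhat1 = rhat0 - vhat) :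
    |rbar0 (b j) - rhat0| ≤ ghat j * E + 4 * u + 2 / Real.sqrt T ∧
    |rbar1 (b j) - rhat1| ≤ (1 - ghat j) * E + 4 * u + 2 / Real.sqrt T := by
  have hT1 : (1:ℝ) ≤ (T:ℝ) := by exact_mod_cast hT
  have hs : 1 ≤ Real.sqrt T := by
    rw [show (1:ℝ) = Real.sqrt 1 from Real.sqrt_one.symm]
    exact Real.sqrt_le_sqrt hT1
  have hs0 : (0:ℝ) < Real.sqrt T := lt_of_lt_of_le one_pos hs
  have hinv0 : (0:ℝ) ≤ 1 / Real.sqrt T := by positivity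
  obtain ⟨k, rfl⟩ : ∃ k, j = k + 1 := ⟨j - 1, by omega⟩
  have hri := riemann_bounds (Real.sqrt T) hs G hmono hrange b hb k hbj
  have hbjmem : b (k+1) ∈ Set.Icc (0:ℝ) 1 := by
    refine ⟨?_, hbj⟩
    rw [hb]
    apply div_nonneg _ hs0.le
    push_cast; linarith [Nat.cast_nonneg (α := ℝ) k]
  have hGb1 : G (b (k+1)) ≤ 1 := (hrange _ hbjmem).2
  have hg := hghat (k+1) (by omega) le_rfl
  have hsumsplit : ∑ i ∈ Finset.Icc 1 (k+1), G (b i)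
      = ∑ i ∈ Finset.Icc 1 k, G (b i) + G (b (k+1)) :=
    Finset.sum_Icc_succ_top (by omega) _
  have hmul : (1 / Real.sqrt T) * G (b (k+1)) ≤ (1 / Real.sqrt T) * 1 :=
    mul_le_mul_of_nonneg_left hGb1 hinv0
  have habsA : |(∫ m in (0:ℝ)..(b (k+1)), G m)
      - (1 / Real.sqrt T) * ∑ i ∈ Finset.Icc 1 (k+1), G (b i)| ≤ 1 / Real.sqrt T := by
    rw [abs_le]
    constructor
    · have h1 := hri.1
      rw [hsumsplit]
      nlinarith [h1]
    · linarith [hri.2]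
  have hSg : |(1 / Real.sqrt T) * ∑ i ∈ Finset.Icc 1 (k+1), G (b i)
      - (1 / Real.sqrt T) * ∑ i ∈ Finset.Icc 1 (k+1), ghat i| ≤ u := by
    have hdiff : (1 / Real.sqrt T) * ∑ i ∈ Finset.Icc 1 (k+1), G (b i)
        - (1 / Real.sqrt T) * ∑ i ∈ Finset.Icc 1 (k+1), ghat i
        = (1 / Real.sqrt T) * ∑ i ∈ Finset.Icc 1 (k+1), (G (b i) - ghat i) := by
      rw [Finset.sum_sub_distrib]; ring
    rw [hdiff, abs_mul, abs_of_nonneg hinv0]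
    exact hGsum
  have ht1 : |(G (b (k+1)) - ghat (k+1)) * (v - b (k+1))| ≤ u := by
    rw [abs_mul]
    calc |G (b (k+1)) - ghat (k+1)| * |v - b (k+1)| ≤ u * 1 :=
        mul_le_mul hGj hvb (abs_nonneg _) hu
      _ = u := mul_one u
  have ht2 : |ghat (k+1) * (v - vhat)| ≤ ghat (k+1) * E := by
    rw [abs_mul, abs_of_nonneg hg.1]
    exact mul_le_mul_of_nonneg_left hvvhat hg.1
  have ht2' : |(ghat (k+1) - 1) * (v - vhat)| ≤ (1 - ghat (k+1)) * E := by
    have h1 : |(ghat (k+1) - 1) * (v - vhat)| = (1 - ghat (k+1)) * |v - vhat| := by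
      rw [abs_mul, abs_of_nonpos (by linarith [hg.2] : ghat (k+1) - 1 ≤ 0)]; ring
    rw [h1]
    exact mul_le_mul_of_nonneg_left hvvhat (by linarith [hg.2])
  have H4 : ∀ a b c d : ℝ, |a + b + c + d| ≤ |a| + |b| + |c| + |d| := by
    intro a b c d
    calc |a + b + c + d| ≤ |a + b + c| + |d| := abs_add_le _ _
      _ ≤ (|a + b| + |c|) + |d| := by linarith [abs_add_le (a + b) c]
      _ ≤ |a| + |b| + |c| + |d| := by linarith [abs_add_le a b]
  have h2div : 2 / Real.sqrt T = 2 * (1 / Real.sqrt T) := by ring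
  constructor
  · have hdec0 : rbar0 (b (k+1)) - rhat0 =
        (G (b (k+1)) - ghat (k+1)) * (v - b (k+1)) + ghat (k+1) * (v - vhat)
        + ((∫ m in (0:ℝ)..(b (k+1)), G m)
            - (1 / Real.sqrt T) * ∑ i ∈ Finset.Icc 1 (k+1), G (b i))
        + ((1 / Real.sqrt T) * ∑ i ∈ Finset.Icc 1 (k+1), G (b i)
            - (1 / Real.sqrt T) * ∑ i ∈ Finset.Icc 1 (k+1), ghat i) := by
      rw [hrbar0, hrhat0]; ring
    rw [hdec0, h2div]
    linarith [H4 ((G (b (k+1)) - ghat (k+1)) * (v - b (k+1))) (ghat (k+1) * (v - vhat))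
      ((∫ m in (0:ℝ)..(b (k+1)), G m)
        - (1 / Real.sqrt T) * ∑ i ∈ Finset.Icc 1 (k+1), G (b i))
      ((1 / Real.sqrt T) * ∑ i ∈ Finset.Icc 1 (k+1), G (b i)
        - (1 / Real.sqrt T) * ∑ i ∈ Finset.Icc 1 (k+1), ghat i), ht1, ht2, habsA, hSg]
  · have hdec1 : rbar1 (b (k+1)) - rhat1 =
        (G (b (k+1)) - ghat (k+1)) * (v - b (k+1)) + (ghat (k+1) - 1) * (v - vhat)
        + ((∫ m in (0:ℝ)..(b (k+1)), G m)
            - (1 / Real.sqrt T) * ∑ i ∈ Finset.Icc 1 (k+1), G (b i))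
        + ((1 / Real.sqrt T) * ∑ i ∈ Finset.Icc 1 (k+1), G (b i)
            - (1 / Real.sqrt T) * ∑ i ∈ Finset.Icc 1 (k+1), ghat i) := by
      rw [hrbar1, hrhat1, hrbar0, hrhat0]; ring
    rw [hdec1, h2div]
    linarith [H4 ((G (b (k+1)) - ghat (k+1)) * (v - b (k+1))) ((ghat (k+1) - 1) * (v - vhat))
      ((∫ m in (0:ℝ)..(b (k+1)), G m)
        - (1 / Real.sqrt T) * ∑ i ∈ Finset.Icc 1 (k+1), G (b i))
      ((1 / Real.sqrt T) * ∑ i ∈ Finset.Icc 1 (k+1), G (b i)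
        - (1 / Real.sqrt T) * ∑ i ∈ Finset.Icc 1 (k+1), ghat i), ht1, ht2', habsA, hSg]
end

section
/- Let Δ ∈ (0, 1/4]. Define G : [0,1] → [0,1] by G(m) = m/2 for 0 ≤ m < 1/4 + Δ and G(m) = m/2 + 1/2 for 1/4 + Δ ≤ m ≤ 1. Let μ₁ = 1/4 and μ₂ = 1/4 + 2Δ, and for i = 1, 2 define r⁽ⁱ⁾(b) = G(b)·(μᵢ − b) + ∫₀ᵇ G(m) dm for b ∈ [0,1]. Then for every b ∈ [0,1], (r⁽¹⁾(μ₁) − r⁽¹⁾(b)) + (r⁽²⁾(μ₂) − r⁽²⁾(b)) ≥ Δ/2. -/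
open intervalIntegral

/-- Two-point separation for the regret lower bound: with the highest-other-bid CDF `G` of
the mixture `½·Unif[0,1] + ½·δ_{1/4+Δ}` and values `μ₁ = 1/4`, `μ₂ = 1/4 + 2Δ`, no single
bid `b ∈ [0,1]` can be simultaneously near-optimal for both expected payoffs
`r⁽ⁱ⁾(b) = G(b)(μᵢ − b) + ∫₀ᵇ G`: the two suboptimality gaps sum to at least `Δ/2`. -/
theorem two_point_separation (Δ : ℝ) (hΔ : Δ ∈ Set.Ioc (0:ℝ) (1/4))
    (G : ℝ → ℝ)
    (hG₁ : ∀ m : ℝ, 0 ≤ m → m < 1/4 + Δ → G m = m / 2)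
    (hG₂ : ∀ m : ℝ, 1/4 + Δ ≤ m → m ≤ 1 → G m = m / 2 + 1/2)
    (μ₁ μ₂ : ℝ) (hμ₁ : μ₁ = 1/4) (hμ₂ : μ₂ = 1/4 + 2 * Δ)
    (r₁ r₂ : ℝ → ℝ)
    (hr₁ : ∀ b, r₁ b = G b * (μ₁ - b) + ∫ m in (0:ℝ)..b, G m)
    (hr₂ : ∀ b, r₂ b = G b * (μ₂ - b) + ∫ m in (0:ℝ)..b, G m) :
    ∀ b ∈ Set.Icc (0:ℝ) 1, (r₁ μ₁ - r₁ b) + (r₂ μ₂ - r₂ b) ≥ Δ / 2 := by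
  obtain ⟨hΔ0, hΔ4⟩ := hΔ
  set c : ℝ := 1/4 + Δ with hc
  have h0c : (0:ℝ) ≤ c := by simp only [hc]; linarith
  have hc1 : c ≤ 1 := by simp only [hc]; linarith
  have hne : ∀ᵐ x : ℝ, x ≠ c := by
    have h0 : (MeasureTheory.volume ({c} : Set ℝ)) = 0 := Real.volume_singleton
    exact MeasureTheory.ae_iff.2 (by simp [h0])
  -- integral on [0,b] for b ≤ c
  have hint1 : ∀ b : ℝ, 0 ≤ b → b ≤ c → (∫ m in (0:ℝ)..b, G m) = b^2/4 := by
    intro b hb0 hbc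
    have hcongr : ∀ᵐ x : ℝ, x ∈ Set.uIoc 0 b → G x = x/2 := by
      filter_upwards [hne] with x hx hmem
      rw [Set.uIoc_of_le hb0] at hmem
      exact hG₁ x hmem.1.le (lt_of_le_of_ne (hmem.2.trans hbc) hx)
    rw [intervalIntegral.integral_congr_ae hcongr]
    have h1 : (∫ x in (0:ℝ)..b, x) = b^2/2 := by
      rw [integral_id]; ring
    rw [show (fun x : ℝ => x/2) = fun x : ℝ => x/2 from rfl,
      intervalIntegral.integral_div, h1]
    ring
  -- interval integrability of G on [0,c] and [c,b]
  have i1 : IntervalIntegrable G MeasureTheory.volume 0 c := by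
    refine ((continuous_id.div_const 2).intervalIntegrable 0 c).congr_ae ?_
    rw [Set.uIoc_of_le h0c]
    filter_upwards [MeasureTheory.ae_restrict_mem measurableSet_Ioc,
      MeasureTheory.ae_restrict_of_ae hne] with x hx hxne
    exact (hG₁ x hx.1.le (lt_of_le_of_ne hx.2 hxne)).symm
  have hint2 : ∀ b : ℝ, c ≤ b → b ≤ 1 → (∫ m in (0:ℝ)..b, G m) = b^2/4 + (b - c)/2 := by
    intro b hcb hb1
    have i2 : IntervalIntegrable G MeasureTheory.volume c b := by
      have hcont : Continuous (fun x : ℝ => x/2 + 1/2) := by continuity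
      refine (hcont.intervalIntegrable c b).congr_ae ?_
      rw [Set.uIoc_of_le hcb]
      filter_upwards [MeasureTheory.ae_restrict_mem measurableSet_Ioc] with x hx
      exact (hG₂ x hx.1.le (hx.2.trans hb1)).symm
    have hsplit : (∫ m in (0:ℝ)..c, G m) + (∫ m in c..b, G m) = ∫ m in (0:ℝ)..b, G m :=
      intervalIntegral.integral_add_adjacent_intervals i1 i2
    have h2 : (∫ m in c..b, G m) = (b^2 - c^2)/4 + (b - c)/2 := by
      have hcongr : ∀ᵐ x : ℝ, x ∈ Set.uIoc c b → G x = x/2 + 1/2 := by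
        filter_upwards with x hmem
        rw [Set.uIoc_of_le hcb] at hmem
        exact hG₂ x hmem.1.le (hmem.2.trans hb1)
      rw [intervalIntegral.integral_congr_ae hcongr]
      have hadd := intervalIntegral.integral_add (μ := MeasureTheory.volume) (a := c) (b := b)
        (f := fun x : ℝ => x/2) (g := fun _ : ℝ => (1:ℝ)/2)
        ((continuous_id.div_const 2).intervalIntegrable c b) (intervalIntegrable_const)
      have h1 : (∫ x in c..b, x) = b^2/2 - c^2/2 := by rw [integral_id]; ring
      rw [show (fun x : ℝ => x/2 + 1/2) = (fun x : ℝ => (fun y : ℝ => y/2) x + (fun _ : ℝ => (1:ℝ)/2) x) from rfl] at *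
      rw [hadd, intervalIntegral.integral_div, h1, intervalIntegral.integral_const]
      simp
      ring
    rw [← hsplit, h2, hint1 c h0c le_rfl]
    ring
  -- values at the optima
  have hμ₁c : μ₁ < c := by rw [hμ₁, hc]; linarith
  have hμ₁0 : (0:ℝ) ≤ μ₁ := by rw [hμ₁]; norm_num
  have hμ₂c : c ≤ μ₂ := by rw [hμ₂, hc]; linarith
  have hμ₂1 : μ₂ ≤ 1 := by rw [hμ₂]; linarith
  have hrμ₁ : r₁ μ₁ = 1/64 := by
    rw [hr₁, hG₁ μ₁ hμ₁0 hμ₁c, hint1 μ₁ hμ₁0 hμ₁c.le, hμ₁]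
    norm_num
  have hrμ₂ : r₂ μ₂ = μ₂^2/4 + Δ/2 := by
    rw [hr₂, hG₂ μ₂ hμ₂c hμ₂1, hint2 μ₂ hμ₂c hμ₂1, hμ₂, hc]
    ring
  intro b hb
  obtain ⟨hb0, hb1⟩ := hb
  rcases lt_or_ge b c with hbc | hcb
  · rw [hrμ₁, hrμ₂, hr₁ b, hr₂ b, hG₁ b hb0 hbc, hint1 b hb0 hbc.le, hμ₁, hμ₂]
    nlinarith [sq_nonneg (b - c), sq_nonneg Δ, sq_nonneg (b - 1/4 - Δ)]
  · rw [hrμ₁, hrμ₂, hr₁ b, hr₂ b, hG₂ b hcb hb1, hint2 b hcb hb1, hμ₁, hμ₂]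
    nlinarith [sq_nonneg (b - 1/4 - Δ), sq_nonneg Δ]
end

section
/- For all real numbers p, q ∈ (0,1), p·log(p/q) + (1−p)·log((1−p)/(1−q)) ≤ (p−q)² / (q·(1−q)). -/
/-- Kullback–Leibler divergence between Bernoulli(p) and Bernoulli(q) is bounded by
the chi-square-type quantity `(p−q)²/(q(1−q))`. -/
theorem bernoulli_kl_le_chi_sq (p q : ℝ) (hp : p ∈ Set.Ioo (0:ℝ) 1) (hq : q ∈ Set.Ioo (0:ℝ) 1) :
    p * Real.log (p / q) + (1 - p) * Real.log ((1 - p) / (1 - q)) ≤ (p - q) ^ 2 / (q * (1 - q)) := by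
  obtain ⟨hp0, hp1⟩ := hp
  obtain ⟨hq0, hq1⟩ := hq
  have hq1' : 0 < 1 - q := by linarith
  have hp1' : 0 < 1 - p := by linarith
  have h1 : Real.log (p / q) ≤ p / q - 1 := Real.log_le_sub_one_of_pos (by positivity)
  have h2 : Real.log ((1 - p) / (1 - q)) ≤ (1 - p) / (1 - q) - 1 :=
    Real.log_le_sub_one_of_pos (by positivity)
  have key : p * (p / q - 1) + (1 - p) * ((1 - p) / (1 - q) - 1)
      = (p - q) ^ 2 / (q * (1 - q)) := by
    field_simp
    ring
  calc p * Real.log (p / q) + (1 - p) * Real.log ((1 - p) / (1 - q))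
      ≤ p * (p / q - 1) + (1 - p) * ((1 - p) / (1 - q) - 1) := by
        gcongr <;> linarith
    _ = (p - q) ^ 2 / (q * (1 - q)) := key
end

section
/- Let G : [0,1] → [0,1] be nondecreasing and v ∈ [0,1], and define the SPA expected payoff r(b) = G(b)·(v − b) + ∫₀ᵇ G(m) dm for b ∈ [0,1]. Then r is nondecreasing on [0, v] and nonincreasing on [v, 1]; that is, if b₁ ≤ b₂ ≤ v then r(b₁) ≤ r(b₂), and if v ≤ b₁ ≤ b₂ then r(b₁) ≥ r(b₂). -/
open intervalIntegral

lemma spa_intInt (G : ℝ → ℝ) (hmono : MonotoneOn G (Set.Icc 0 1))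
    {a b : ℝ} (ha : a ∈ Set.Icc (0:ℝ) 1) (hb : b ∈ Set.Icc (0:ℝ) 1) :
    IntervalIntegrable G MeasureTheory.volume a b := by
  apply MonotoneOn.intervalIntegrable
  apply hmono.mono
  rw [show Set.Icc (0:ℝ) 1 = Set.uIcc 0 1 from (Set.uIcc_of_le (by norm_num)).symm]
  exact Set.uIcc_subset_uIcc (by rwa [Set.uIcc_of_le (by norm_num : (0:ℝ) ≤ 1)]) (by rwa [Set.uIcc_of_le (by norm_num : (0:ℝ) ≤ 1)])

/-- Unimodality of the second-price auction payoff around the value: for a nondecreasing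
`G : [0,1] → [0,1]`, value `v ∈ [0,1]`, and `r b = G b (v − b) + ∫₀ᵇ G`, the payoff `r` is
nondecreasing on `[0, v]` and nonincreasing on `[v, 1]`. -/
theorem spa_payoff_unimodal (G : ℝ → ℝ) (hmono : MonotoneOn G (Set.Icc 0 1))
    (hrange : ∀ m ∈ Set.Icc (0:ℝ) 1, G m ∈ Set.Icc (0:ℝ) 1)
    (v : ℝ) (hv : v ∈ Set.Icc (0:ℝ) 1)
    (r : ℝ → ℝ) (hr : ∀ b, r b = G b * (v - b) + ∫ m in (0:ℝ)..b, G m) :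
    (∀ b₁ ∈ Set.Icc (0:ℝ) 1, ∀ b₂ ∈ Set.Icc (0:ℝ) 1,
        b₁ ≤ b₂ → b₂ ≤ v → r b₁ ≤ r b₂) ∧
    (∀ b₁ ∈ Set.Icc (0:ℝ) 1, ∀ b₂ ∈ Set.Icc (0:ℝ) 1,
        v ≤ b₁ → b₁ ≤ b₂ → r b₂ ≤ r b₁) := by
  have h0 : (0:ℝ) ∈ Set.Icc (0:ℝ) 1 := by norm_num
  have key : ∀ b₁ ∈ Set.Icc (0:ℝ) 1, ∀ b₂ ∈ Set.Icc (0:ℝ) 1, b₁ ≤ b₂ →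
      r b₂ - r b₁ = G b₂ * (v - b₂) - G b₁ * (v - b₁) + ∫ m in b₁..b₂, G m := by
    intro b₁ h₁ b₂ h₂ hle
    have hsplit : (∫ m in (0:ℝ)..b₁, G m) + (∫ m in b₁..b₂, G m) = ∫ m in (0:ℝ)..b₂, G m :=
      integral_add_adjacent_intervals (spa_intInt G hmono h0 h₁) (spa_intInt G hmono h₁ h₂)
    rw [hr, hr]
    linarith [hsplit]
  have hsub : ∀ b₁ ∈ Set.Icc (0:ℝ) 1, ∀ b₂ ∈ Set.Icc (0:ℝ) 1, b₁ ≤ b₂ →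
      Set.Icc b₁ b₂ ⊆ Set.Icc (0:ℝ) 1 :=
    fun b₁ h₁ b₂ h₂ _ => Set.Icc_subset_Icc h₁.1 h₂.2
  constructor
  · intro b₁ h₁ b₂ h₂ hle hbv
    have hlb : G b₁ * (b₂ - b₁) ≤ ∫ m in b₁..b₂, G m := by
      have := integral_mono_on hle (_root_.intervalIntegrable_const (c := G b₁))
        (spa_intInt G hmono h₁ h₂)
        (fun x hx => hmono h₁ (hsub b₁ h₁ b₂ h₂ hle hx) hx.1)
      simpa [mul_comm] using this
    have hkey := key b₁ h₁ b₂ h₂ hle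
    have hGmono : G b₁ ≤ G b₂ := hmono h₁ h₂ hle
    nlinarith [hkey, hlb, hGmono]
  · intro b₁ h₁ b₂ h₂ hvb hle
    have hub : (∫ m in b₁..b₂, G m) ≤ G b₂ * (b₂ - b₁) := by
      have := integral_mono_on hle (spa_intInt G hmono h₁ h₂)
        (_root_.intervalIntegrable_const (c := G b₂))
        (fun x hx => hmono (hsub b₁ h₁ b₂ h₂ hle hx) h₂ hx.2)
      simpa [mul_comm] using this
    have hkey := key b₁ h₁ b₂ h₂ hle
    have hGmono : G b₁ ≤ G b₂ := hmono h₁ h₂ hle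
    nlinarith [hkey, hub, hGmono]
end
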